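/- arXiv:2509.07580 — 9 statements merged into one kernel-verified Lean document; each statement's English description precedes it below -/
import Mathlib

section
/- Let E be a real normed vector space, let m ≥ 1, p ≥ 1 and k ≥ 2m be integers, and set k_m = k − (k mod m). Let κ_A ≥ 0, κ_C ≥ 1, L ≥ 0 be reals, let (T_j), (D_j), (T̃_j) be sequences in E, and let (s_j) be a sequence of nonnegative reals. Assume: (i) ‖T_{k_m} − D_{k_m}‖ ≤ κ_A · Σ_{i=1}^{m} s_{k_m − i}; (ii) for every j with k_m < j ≤ k one has ‖T_j − T̃_{j−1}‖ ≤ κ_C · ‖T_{j−1} − T̃_{j−1}‖, ‖T̃_{j−1} − D_j‖ ≤ (L/2) · s_{j−1}, and ‖T̃_{j−1} − D_{j−1}‖ ≤ (L/2) · s_{j−1}. Then ‖T_k − D_k‖^{p+1} ≤ (2m−1)^p · C^{p+1} · Σ_{i=k−2m+1}^{k−1} s_i^{p+1}, where C = max( κ_C^{m−1} · κ_A , (L/2) · (1 + κ_C) · κ_C^{m−1} ). -/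
/-!
Write `e_j = ‖T_j - D_j‖`. Inserting `T̃_{j-1}` and `D_{j-1}` by the triangle inequality turns
the update rule into the linear recursion `e_j ≤ κ_C e_{j-1} + (L/2)(1 + κ_C) s_{j-1}`, which
unrolls from the reset `k_m` over `k - k_m < m` steps into `κ_C^{m-1}` times the reset error plus
the step lengths since the reset. The reset error is `κ_A` times the `m` step lengths before
`k_m`, so `e_k ≤ C Σ s_i` over a window of `2m - 1` consecutive indices ending at `k - 1`, and the
power mean inequality `(Σ s_i)^{p+1} ≤ (2m - 1)^p Σ s_i^{p+1}` finishes the proof.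
-/

open Finset

theorem norm_sub_le_of_contraction_step {E : Type*} [SeminormedAddCommGroup E]
    {T T' Tt D D' : E} {κ a : ℝ} (hκ : 0 ≤ κ)
    (hT : ‖T' - Tt‖ ≤ κ * ‖T - Tt‖) (hD' : ‖Tt - D'‖ ≤ a) (hD : ‖Tt - D‖ ≤ a) :
    ‖T' - D'‖ ≤ κ * ‖T - D‖ + (1 + κ) * a := by
  have hT'D' : ‖T' - D'‖ ≤ ‖T' - Tt‖ + ‖Tt - D'‖ := norm_sub_le_norm_sub_add_norm_sub _ _ _
  have hTTt : ‖T - Tt‖ ≤ ‖T - D‖ + ‖Tt - D‖ := by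
    rw [norm_sub_rev Tt D]
    exact norm_sub_le_norm_sub_add_norm_sub _ _ _
  linarith [mul_le_mul_of_nonneg_left hTTt hκ, mul_le_mul_of_nonneg_left hD hκ]

theorem le_pow_mul_add_sum_of_le_mul_add {e b : ℕ → ℝ} {c : ℝ} {n : ℕ} (hc : 1 ≤ c)
    (hb : ∀ l < n, 0 ≤ b l) (he : ∀ l < n, e (l + 1) ≤ c * e l + b l) :
    e n ≤ c ^ n * (e 0 + ∑ l ∈ range n, b l) := by
  induction n with
  | zero => simp
  | succ n ih =>
    have ih := ih (fun l hl => hb l (by omega)) (fun l hl => he l (by omega))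
    have hbn : b n ≤ c ^ (n + 1) * b n :=
      le_mul_of_one_le_left (hb n (by omega)) (one_le_pow₀ hc)
    calc e (n + 1) ≤ c * e n + b n := he n (by omega)
      _ ≤ c * (c ^ n * (e 0 + ∑ l ∈ range n, b l)) + c ^ (n + 1) * b n :=
        add_le_add (mul_le_mul_of_nonneg_left ih (by linarith)) hbn
      _ = c ^ (n + 1) * (e 0 + ∑ l ∈ range (n + 1), b l) := by rw [sum_range_succ]; ring

theorem norm_sub_le_pow_mul_of_contraction_steps {E : Type*} [SeminormedAddCommGroup E]
    {T D Tt : ℕ → E} {s : ℕ → ℝ} {κ a : ℝ} {n N : ℕ} (hκ : 1 ≤ κ) (ha : 0 ≤ a)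
    (hs : ∀ j, 0 ≤ s j) (hnN : n ≤ N)
    (hT : ∀ j, n < j → j ≤ N → ‖T j - Tt (j - 1)‖ ≤ κ * ‖T (j - 1) - Tt (j - 1)‖)
    (hD' : ∀ j, n < j → j ≤ N → ‖Tt (j - 1) - D j‖ ≤ a * s (j - 1))
    (hD : ∀ j, n < j → j ≤ N → ‖Tt (j - 1) - D (j - 1)‖ ≤ a * s (j - 1)) :
    ‖T N - D N‖ ≤ κ ^ (N - n) * (‖T n - D n‖ + (1 + κ) * a * ∑ j ∈ Ico n N, s j) := by
  have hsteps := le_pow_mul_add_sum_of_le_mul_add (e := fun l => ‖T (n + l) - D (n + l)‖)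
    (b := fun l => (1 + κ) * a * s (n + l)) (n := N - n) hκ
    (fun l _ => mul_nonneg (mul_nonneg (by linarith) ha) (hs _)) fun l hl => by
      have hstep := norm_sub_le_of_contraction_step (by linarith : (0 : ℝ) ≤ κ)
        (hT (n + (l + 1)) (by omega) (by omega)) (hD' (n + (l + 1)) (by omega) (by omega))
        (hD (n + (l + 1)) (by omega) (by omega))
      rw [show n + (l + 1) - 1 = n + l by omega] at hstep
      linarith
  rw [sum_Ico_eq_sum_range, mul_sum]
  simpa only [add_zero, show n + (N - n) = N by omega] using hsteps

theorem sum_Icc_one_sub_eq_sum_Ico {M : Type*} [AddCommMonoid M] (s : ℕ → M) {m n : ℕ}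
    (h : m ≤ n) : ∑ i ∈ Icc 1 m, s (n - i) = ∑ j ∈ Ico (n - m) n, s j :=
  sum_nbij' (fun i => n - i) (fun j => n - j)
    (fun i hi => by simp only [mem_Icc, mem_Ico] at hi ⊢; omega)
    (fun j hj => by simp only [mem_Icc, mem_Ico] at hj ⊢; omega)
    (fun i hi => by simp only [mem_Icc] at hi; omega)
    (fun j hj => by simp only [mem_Ico] at hj; omega)
    (fun _ _ => rfl)

theorem sum_Icc_one_sub_add_sum_Ico_le {s : ℕ → ℝ} (hs : ∀ j, 0 ≤ s j) {m n N : ℕ}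
    (hN : 2 * m ≤ N) (hnN : n ≤ N) (hNn : N < n + m) :
    ∑ i ∈ Icc 1 m, s (n - i) + ∑ j ∈ Ico n N, s j ≤ ∑ j ∈ Icc (N - 2 * m + 1) (N - 1), s j := by
  rw [sum_Icc_one_sub_eq_sum_Ico s (by omega), sum_Ico_consecutive _ (by omega) hnN]
  exact sum_le_sum_of_subset_of_nonneg (fun j => by simp only [mem_Ico, mem_Icc]; omega)
    fun j _ _ => hs j

theorem pow_succ_le_card_pow_mul_sum_pow {ι : Type*} {S : Finset ι} {s : ι → ℝ}
    (hs : ∀ i ∈ S, 0 ≤ s i) {x C : ℝ} (hx : 0 ≤ x) (hC : 0 ≤ C)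
    (h : x ≤ C * ∑ i ∈ S, s i) (p : ℕ) :
    x ^ (p + 1) ≤ (#S : ℝ) ^ p * C ^ (p + 1) * ∑ i ∈ S, s i ^ (p + 1) :=
  calc x ^ (p + 1) ≤ (C * ∑ i ∈ S, s i) ^ (p + 1) := pow_le_pow_left₀ hx h _
    _ = C ^ (p + 1) * (∑ i ∈ S, s i) ^ (p + 1) := mul_pow _ _ _
    _ ≤ C ^ (p + 1) * ((#S : ℝ) ^ p * ∑ i ∈ S, s i ^ (p + 1)) :=
      mul_le_mul_of_nonneg_left (pow_sum_le_card_mul_sum_pow hs p) (by positivity)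
    _ = (#S : ℝ) ^ p * C ^ (p + 1) * ∑ i ∈ S, s i ^ (p + 1) := by ring

theorem stmt_1_general {E : Type*} [NormedAddCommGroup E] [NormedSpace ℝ E]
    (m p k : ℕ) (hm : 1 ≤ m) (hk : 2 * m ≤ k)
    (κA κC L : ℝ) (hκC : 1 ≤ κC) (hL : 0 ≤ L)
    (T D Tt : ℕ → E) (s : ℕ → ℝ) (hs : ∀ j, 0 ≤ s j)
    (km : ℕ) (hkm : km = k - k % m)
    (h1 : ‖T km - D km‖ ≤ κA * ∑ i ∈ Finset.Icc 1 m, s (km - i))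
    (h2 : ∀ j, km < j → j ≤ k → ‖T j - Tt (j - 1)‖ ≤ κC * ‖T (j - 1) - Tt (j - 1)‖)
    (h3 : ∀ j, km < j → j ≤ k → ‖Tt (j - 1) - D j‖ ≤ L / 2 * s (j - 1))
    (h4 : ∀ j, km < j → j ≤ k → ‖Tt (j - 1) - D (j - 1)‖ ≤ L / 2 * s (j - 1)) :
    ‖T k - D k‖ ^ (p + 1) ≤
      ((2 * m - 1 : ℕ) : ℝ) ^ p *
        max (κC ^ (m - 1) * κA) (L / 2 * (1 + κC) * κC ^ (m - 1)) ^ (p + 1) *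
        ∑ i ∈ Finset.Icc (k - 2 * m + 1) (k - 1), s i ^ (p + 1) := by
  have hkm : km ≤ k ∧ k < km + m := by have := Nat.mod_lt k hm; omega
  set C := max (κC ^ (m - 1) * κA) (L / 2 * (1 + κC) * κC ^ (m - 1))
  set reset := ∑ i ∈ Icc 1 m, s (km - i)
  set since := ∑ j ∈ Ico km k, s j
  have hreset : 0 ≤ reset := sum_nonneg fun i _ => hs _
  have hsince : 0 ≤ since := sum_nonneg fun j _ => hs j
  have hunrolled := norm_sub_le_pow_mul_of_contraction_steps hκC (by positivity) hs hkm.1 h2 h3 h4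
  have hbound : ‖T k - D k‖ ≤ C * ∑ i ∈ Icc (k - 2 * m + 1) (k - 1), s i :=
    calc ‖T k - D k‖ ≤ κC ^ (m - 1) * (κA * reset + (1 + κC) * (L / 2) * since) :=
          hunrolled.trans (mul_le_mul (pow_le_pow_right₀ hκC (by omega)) (by linarith)
            (by positivity) (by positivity))
      _ = κC ^ (m - 1) * κA * reset + L / 2 * (1 + κC) * κC ^ (m - 1) * since := by ring
      _ ≤ C * (reset + since) := by
          rw [mul_add C]
          exact add_le_add (mul_le_mul_of_nonneg_right (le_max_left _ _) hreset)
            (mul_le_mul_of_nonneg_right (le_max_right _ _) hsince)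
      _ ≤ C * ∑ i ∈ Icc (k - 2 * m + 1) (k - 1), s i :=
          mul_le_mul_of_nonneg_left (sum_Icc_one_sub_add_sum_Ico_le hs hk hkm.1 hkm.2)
            (le_max_of_le_right (by positivity))
  have hcard : #(Icc (k - 2 * m + 1) (k - 1)) = 2 * m - 1 := by
    rw [Nat.card_Icc]; omega
  simpa only [hcard] using pow_succ_le_card_pow_mul_sum_pow (fun i _ => hs i) (norm_nonneg _)
    (le_max_of_le_right (by positivity)) hbound p

/-- Error-propagation bound for an inexact `p`-th order tensor reset every `m` iterations. -/
theorem stmt_1 {E : Type*} [NormedAddCommGroup E] [NormedSpace ℝ E]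
    (m p k : ℕ) (hm : 1 ≤ m) (hp : 1 ≤ p) (hk : 2 * m ≤ k)
    (κA κC L : ℝ) (hκA : 0 ≤ κA) (hκC : 1 ≤ κC) (hL : 0 ≤ L)
    (T D Tt : ℕ → E) (s : ℕ → ℝ) (hs : ∀ j, 0 ≤ s j)
    (km : ℕ) (hkm : km = k - k % m)
    (h1 : ‖T km - D km‖ ≤ κA * ∑ i ∈ Finset.Icc 1 m, s (km - i))
    (h2 : ∀ j, km < j → j ≤ k → ‖T j - Tt (j - 1)‖ ≤ κC * ‖T (j - 1) - Tt (j - 1)‖)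
    (h3 : ∀ j, km < j → j ≤ k → ‖Tt (j - 1) - D j‖ ≤ L / 2 * s (j - 1))
    (h4 : ∀ j, km < j → j ≤ k → ‖Tt (j - 1) - D (j - 1)‖ ≤ L / 2 * s (j - 1)) :
    ‖T k - D k‖ ^ (p + 1) ≤
      ((2 * m - 1 : ℕ) : ℝ) ^ p *
        max (κC ^ (m - 1) * κA) (L / 2 * (1 + κC) * κC ^ (m - 1)) ^ (p + 1) *
        ∑ i ∈ Finset.Icc (k - 2 * m + 1) (k - 1), s i ^ (p + 1) :=
  stmt_1_general m p k hm hk κA κC L hκC hL T D Tt s hs km hkm h1 h2 h3 h4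
end

section
/- Let p ≥ 2 be an integer and let L ≥ 0, κ_D ≥ 0, ξ ≥ 0, α ≥ 0, A ≥ 0, e ≥ 0, s ≥ 0 and 0 < σ ≤ σ' be real numbers. Assume A ≤ (L/(p−1)!) · s^{p−1} + (1/(p−2)!) · e · s^{p−2} and e^{p+1} ≤ κ_D · ξ. Then A^{(p+1)/(p−1)} / σ'^{α} ≤ κ₁ · s^{p+1} / σ'^{α} + κ₂ · ξ / σ^{α}, where κ₁ = 3^{2/(p−1)} · ( (L/(p−1)!)^{(p+1)/(p−1)} + ((p−2)/(p−1)!)^{(p+1)/(p−1)} ) and κ₂ = 3^{2/(p−1)} · κ_D · (1/(p−1)!)^{(p+1)/(p−1)}. -/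
/-!
Weighted AM–GM splits the mixed term `e * s ^ (p - 2)` into multiples of `e ^ (p - 1)` and
`s ^ (p - 1)`, so `A` is bounded by three terms homogeneous of degree `p - 1`. Raising this to the
power `q = (p + 1) / (p - 1) ≥ 1` and using the power-mean inequality
`(x + y + z) ^ q ≤ 3 ^ (q - 1) * (x ^ q + y ^ q + z ^ q)` turns them into terms of degree `p + 1`,
where `e ^ (p + 1) ≤ κD * ξ` applies. Finally `σ ^ α ≤ σ' ^ α` moves the `ξ`-term to the
denominator `σ ^ α`.
-/

open Real

theorem Real.pow_rpow_natCast_div {t : ℝ} (ht : 0 ≤ t) {m : ℕ} (hm : m ≠ 0) (k : ℕ) :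
    (t ^ m) ^ ((k : ℝ) / m) = t ^ k := by
  rw [← rpow_natCast t m, ← rpow_mul ht, mul_div_cancel₀ _ (Nat.cast_ne_zero.mpr hm),
    rpow_natCast]

theorem Real.add_three_rpow_le {x y z q : ℝ} (hx : 0 ≤ x) (hy : 0 ≤ y) (hz : 0 ≤ z) (hq : 1 ≤ q) :
    (x + y + z) ^ q ≤ 3 ^ (q - 1) * (x ^ q + y ^ q + z ^ q) := by
  have h := rpow_sum_le_const_mul_sum_rpow_of_nonneg Finset.univ (f := ![x, y, z]) hq
    (by intro i _; fin_cases i <;> assumption)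
  simpa [Fin.sum_univ_three, add_assoc] using h

theorem mul_pow_le_pow_succ_add {a b : ℝ} (ha : 0 ≤ a) (hb : 0 ≤ b) (n : ℕ) :
    (n + 1) * (a * b ^ n) ≤ a ^ (n + 1) + n * b ^ (n + 1) := by
  have hn : (n : ℝ) + 1 ≠ 0 := by positivity
  have h := geom_mean_le_arith_mean2_weighted (w₁ := 1 / (n + 1)) (w₂ := n / (n + 1))
    (by positivity) (by positivity) (pow_nonneg ha (n + 1)) (pow_nonneg hb (n + 1))
    (by field_simp; ring)
  have e1 := pow_rpow_natCast_div ha (Nat.succ_ne_zero n) 1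
  have e2 := pow_rpow_natCast_div hb (Nat.succ_ne_zero n) n
  push_cast at e1 e2
  rw [e1, e2, pow_one] at h
  calc (n + 1) * (a * b ^ n)
      ≤ (n + 1) * (1 / (n + 1) * a ^ (n + 1) + n / (n + 1) * b ^ (n + 1)) := by gcongr
    _ = a ^ (n + 1) + n * b ^ (n + 1) := by field_simp

theorem one_div_factorial_mul_mul_pow_le {e s : ℝ} (he : 0 ≤ e) (hs : 0 ≤ s) (n : ℕ) :
    1 / (n.factorial : ℝ) * e * s ^ n ≤
      n / ((n + 1).factorial : ℝ) * s ^ (n + 1) + 1 / ((n + 1).factorial : ℝ) * e ^ (n + 1) := by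
  rw [Nat.factorial_succ, Nat.cast_mul, Nat.cast_succ]
  calc 1 / (n.factorial : ℝ) * e * s ^ n = (n + 1) * (e * s ^ n) / ((n + 1) * n.factorial) := by
        field_simp
    _ ≤ (e ^ (n + 1) + n * s ^ (n + 1)) / ((n + 1) * n.factorial) := by
        gcongr; exact mul_pow_le_pow_succ_add he hs n
    _ = _ := by ring

theorem rpow_le_of_le_three_terms {A a b c s e K : ℝ} {m k : ℕ} (hm : m ≠ 0) (hmk : m ≤ k)
    (hA : 0 ≤ A) (ha : 0 ≤ a) (hb : 0 ≤ b) (hc : 0 ≤ c) (hs : 0 ≤ s) (he : 0 ≤ e)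
    (hAle : A ≤ a * s ^ m + b * s ^ m + c * e ^ m) (heK : e ^ k ≤ K) :
    A ^ ((k : ℝ) / m) ≤
      3 ^ ((k : ℝ) / m - 1) * (a ^ ((k : ℝ) / m) + b ^ ((k : ℝ) / m)) * s ^ k +
        3 ^ ((k : ℝ) / m - 1) * c ^ ((k : ℝ) / m) * K := by
  set q : ℝ := (k : ℝ) / m
  have hq : 1 ≤ q := by
    rw [one_le_div₀ (by positivity)]
    exact_mod_cast hmk
  have hpow : ∀ {d t : ℝ}, 0 ≤ d → 0 ≤ t → (d * t ^ m) ^ q = d ^ q * t ^ k := fun hd ht => by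
    rw [mul_rpow hd (by positivity), pow_rpow_natCast_div ht hm]
  calc A ^ q ≤ (a * s ^ m + b * s ^ m + c * e ^ m) ^ q := by gcongr
    _ ≤ 3 ^ (q - 1) * ((a * s ^ m) ^ q + (b * s ^ m) ^ q + (c * e ^ m) ^ q) :=
      add_three_rpow_le (by positivity) (by positivity) (by positivity) hq
    _ = 3 ^ (q - 1) * (a ^ q * s ^ k + b ^ q * s ^ k + c ^ q * e ^ k) := by
      rw [hpow ha hs, hpow hb hs, hpow hc he]
    _ ≤ 3 ^ (q - 1) * (a ^ q * s ^ k + b ^ q * s ^ k + c ^ q * K) := by gcongr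
    _ = _ := by ring

theorem div_rpow_le_div_rpow_add_div_rpow {X B C σ σ' α : ℝ} (hX : X ≤ B + C) (hC : 0 ≤ C)
    (hσ : 0 < σ) (hσσ' : σ ≤ σ') (hα : 0 ≤ α) :
    X / σ' ^ α ≤ B / σ' ^ α + C / σ ^ α := by
  have hσ'α : 0 < σ' ^ α := rpow_pos_of_pos (hσ.trans_le hσσ') α
  calc X / σ' ^ α ≤ B / σ' ^ α + C / σ' ^ α := by rw [← add_div]; gcongr
    _ ≤ B / σ' ^ α + C / σ ^ α := by
      gcongr B / σ' ^ α + C / ?_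
      exact rpow_le_rpow hσ.le hσσ' hα

theorem stmt_3_general (p : ℕ) (hp : 2 ≤ p)
    (L κD ξ α A e s σ σ' : ℝ)
    (hL : 0 ≤ L) (hα : 0 ≤ α)
    (hA : 0 ≤ A) (he : 0 ≤ e) (hs : 0 ≤ s) (hσ : 0 < σ) (hσ' : σ ≤ σ')
    (hAle : A ≤ L / ((p - 1).factorial : ℝ) * s ^ (p - 1)
        + 1 / ((p - 2).factorial : ℝ) * e * s ^ (p - 2))
    (hepow : e ^ (p + 1) ≤ κD * ξ) :
    A ^ (((p : ℝ) + 1) / ((p : ℝ) - 1)) / σ' ^ α ≤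
      (3 : ℝ) ^ ((2 : ℝ) / ((p : ℝ) - 1)) *
          ((L / ((p - 1).factorial : ℝ)) ^ (((p : ℝ) + 1) / ((p : ℝ) - 1)) +
            (((p : ℝ) - 2) / ((p - 1).factorial : ℝ)) ^ (((p : ℝ) + 1) / ((p : ℝ) - 1))) *
          s ^ (p + 1) / σ' ^ α +
        (3 : ℝ) ^ ((2 : ℝ) / ((p : ℝ) - 1)) * κD *
          ((1 : ℝ) / ((p - 1).factorial : ℝ)) ^ (((p : ℝ) + 1) / ((p : ℝ) - 1)) * ξ / σ ^ α := by
  obtain ⟨n, rfl⟩ : ∃ n, p = n + 2 := ⟨p - 2, by omega⟩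
  have hexp : ((n + 2 : ℕ) + 1 : ℝ) / ((n + 2 : ℕ) - 1) = ((n + 3 : ℕ) : ℝ) / (n + 1 : ℕ) := by
    push_cast; ring
  have hexp_sub_one : (2 : ℝ) / ((n + 2 : ℕ) - 1) = ((n + 3 : ℕ) : ℝ) / (n + 1 : ℕ) - 1 := by
    push_cast
    rw [show (n : ℝ) + 2 - 1 = n + 1 by ring]
    field_simp
    ring
  have hcoef : ((n + 2 : ℕ) : ℝ) - 2 = n := by push_cast; ring
  simp only [Nat.add_sub_cancel, Nat.add_succ_sub_one] at hAle ⊢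
  rw [hexp, hexp_sub_one, hcoef]
  have hthree := hAle.trans (add_le_add_right (one_div_factorial_mul_mul_pow_le he hs n) _)
  rw [← add_assoc] at hthree
  have key := rpow_le_of_le_three_terms (Nat.succ_ne_zero n) (by omega) hA (by positivity)
    (by positivity) (by positivity) hs he hthree hepow
  refine (div_rpow_le_div_rpow_add_div_rpow key ?_ hσ hσ' hα).trans_eq ?_
  · exact mul_nonneg (by positivity) ((pow_nonneg he _).trans hepow)
  · ring

/-- Hessian error bound for the inexact Taylor model (Lemma 2 in the paper). -/
theorem stmt_3 (p : ℕ) (hp : 2 ≤ p)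
    (L κD ξ α A e s σ σ' : ℝ)
    (hL : 0 ≤ L) (hκD : 0 ≤ κD) (hξ : 0 ≤ ξ) (hα : 0 ≤ α)
    (hA : 0 ≤ A) (he : 0 ≤ e) (hs : 0 ≤ s) (hσ : 0 < σ) (hσ' : σ ≤ σ')
    (hAle : A ≤ L / ((p - 1).factorial : ℝ) * s ^ (p - 1)
        + 1 / ((p - 2).factorial : ℝ) * e * s ^ (p - 2))
    (hepow : e ^ (p + 1) ≤ κD * ξ) :
    A ^ (((p : ℝ) + 1) / ((p : ℝ) - 1)) / σ' ^ α ≤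
      (3 : ℝ) ^ ((2 : ℝ) / ((p : ℝ) - 1)) *
          ((L / ((p - 1).factorial : ℝ)) ^ (((p : ℝ) + 1) / ((p : ℝ) - 1)) +
            (((p : ℝ) - 2) / ((p - 1).factorial : ℝ)) ^ (((p : ℝ) + 1) / ((p : ℝ) - 1))) *
          s ^ (p + 1) / σ' ^ α +
        (3 : ℝ) ^ ((2 : ℝ) / ((p : ℝ) - 1)) * κD *
          ((1 : ℝ) / ((p - 1).factorial : ℝ)) ^ (((p : ℝ) + 1) / ((p : ℝ) - 1)) * ξ / σ ^ α :=
  stmt_3_general p hp L κD ξ α A e s σ σ' hL hα hA he hs hσ hσ' hAle hepow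
end

section
/- Let p ≥ 1 be an integer, c > 0 and t ≥ 0 real numbers, and a₁,…,a_p ≥ 0 real numbers. If c · t^{p+1} ≤ Σ_{i=1}^{p} a_i · t^{i}, then t ≤ 2 · max_{1 ≤ i ≤ p} (a_i / c)^{1/(p+1−i)}. -/
/-!
Put `M = max_i (a_i / c)^{1/(p+1-i)}`, so that `a_i ≤ c M^{p+1-i}`. If `t > 2M`, the sums
`S_p = ∑_{i=1}^p M^{p+1-i} t^i` satisfy `S_p < t^{p+1}`, by induction from
`S_{p+1} = M (S_p + t^{p+1}) < 2M t^{p+1} < t^{p+2}`. This contradicts the hypothesis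
`c t^{p+1} ≤ ∑ a_i t^i ≤ c S_p`.
-/

open Finset

lemma Real.le_pow_of_rpow_one_div_le {x M : ℝ} {n : ℕ} (hx : 0 ≤ x) (hn : n ≠ 0)
    (h : x ^ (1 / (n : ℝ)) ≤ M) : x ≤ M ^ n := by
  rw [one_div] at h
  calc x = (x ^ ((n : ℝ)⁻¹)) ^ n := (Real.rpow_inv_natCast_pow hx hn).symm
    _ ≤ M ^ n := pow_le_pow_left₀ (Real.rpow_nonneg hx _) h n

lemma sum_Icc_pow_sub_mul_pow_lt {M t : ℝ} (hM : 0 ≤ M) (ht : 2 * M < t) (p : ℕ) :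
    ∑ i ∈ Icc 1 p, M ^ (p + 1 - i) * t ^ i < t ^ (p + 1) := by
  have ht0 : 0 < t := by linarith
  induction p with
  | zero => simpa using ht0
  | succ p ih =>
    have hshift : ∑ i ∈ Icc 1 p, M ^ (p + 1 + 1 - i) * t ^ i
        = M * ∑ i ∈ Icc 1 p, M ^ (p + 1 - i) * t ^ i := by
      rw [mul_sum]
      refine sum_congr rfl fun i hi => ?_
      rw [show p + 1 + 1 - i = p + 1 - i + 1 by grind, pow_succ]
      ring
    have htop : 0 < t ^ (p + 1) := pow_pos ht0 _
    rw [sum_Icc_succ_top (by omega), hshift, Nat.add_sub_cancel_left, pow_one]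
    calc M * ∑ i ∈ Icc 1 p, M ^ (p + 1 - i) * t ^ i + M * t ^ (p + 1)
        ≤ M * t ^ (p + 1) + M * t ^ (p + 1) := by gcongr
      _ = 2 * M * t ^ (p + 1) := by ring
      _ < t * t ^ (p + 1) := mul_lt_mul_of_pos_right ht htop
      _ = t ^ (p + 1 + 1) := (pow_succ' t (p + 1)).symm

theorem stmt_4_general (p : ℕ) (hp : 1 ≤ p) (c t : ℝ) (hc : 0 < c)
    (a : ℕ → ℝ) (ha : ∀ i ∈ Finset.Icc 1 p, 0 ≤ a i)
    (h : c * t ^ (p + 1) ≤ ∑ i ∈ Finset.Icc 1 p, a i * t ^ i) :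
    t ≤ 2 * (Finset.Icc 1 p).sup' (Finset.nonempty_Icc.mpr hp)
        (fun i => (a i / c) ^ ((1 : ℝ) / ((p : ℝ) + 1 - (i : ℝ)))) := by
  set M := (Icc 1 p).sup' (nonempty_Icc.mpr hp)
    (fun i => (a i / c) ^ ((1 : ℝ) / ((p : ℝ) + 1 - (i : ℝ))))
  have hM : 0 ≤ M := (Real.rpow_nonneg (div_nonneg (ha 1 (by simp [hp])) hc.le) _).trans
    (le_sup' (fun i => (a i / c) ^ ((1 : ℝ) / ((p : ℝ) + 1 - (i : ℝ)))) (by simp [hp]))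
  have hcoef : ∀ i ∈ Icc 1 p, a i ≤ c * M ^ (p + 1 - i) := fun i hi => by
    have hexp : (p : ℝ) + 1 - (i : ℝ) = ((p + 1 - i : ℕ) : ℝ) := by
      rw [Nat.cast_sub (by grind)]; push_cast; ring
    have hle := le_sup' (fun i => (a i / c) ^ ((1 : ℝ) / ((p : ℝ) + 1 - (i : ℝ)))) hi
    rw [hexp] at hle
    have := Real.le_pow_of_rpow_one_div_le (div_nonneg (ha i hi) hc.le)
      (by grind) hle
    rwa [div_le_iff₀' hc] at this
  by_contra! hlt
  have ht : 0 < t := by linarith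
  have hsum : ∑ i ∈ Icc 1 p, a i * t ^ i ≤ c * ∑ i ∈ Icc 1 p, M ^ (p + 1 - i) * t ^ i := by
    rw [mul_sum]
    refine sum_le_sum fun i hi => ?_
    rw [← mul_assoc]
    exact mul_le_mul_of_nonneg_right (hcoef i hi) (pow_nonneg ht.le i)
  have := mul_lt_mul_of_pos_left (sum_Icc_pow_sub_mul_pow_lt hM hlt p) hc
  linarith

/-- Lagrange-type root bound used to control the step length. -/
theorem stmt_4 (p : ℕ) (hp : 1 ≤ p) (c t : ℝ) (hc : 0 < c) (ht : 0 ≤ t)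
    (a : ℕ → ℝ) (ha : ∀ i ∈ Finset.Icc 1 p, 0 ≤ a i)
    (h : c * t ^ (p + 1) ≤ ∑ i ∈ Finset.Icc 1 p, a i * t ^ i) :
    t ≤ 2 * (Finset.Icc 1 p).sup' (Finset.nonempty_Icc.mpr hp)
        (fun i => (a i / c) ^ ((1 : ℝ) / ((p : ℝ) + 1 - (i : ℝ)))) :=
  stmt_4_general p hp c t hc a ha h
end

section
/- Let n ≥ 1 and p ≥ 1 be integers, let W be an invertible self-adjoint positive definite continuous linear operator on EuclideanSpace ℝ (Fin n), let s be a nonzero vector, set v = W⁻¹ s, and let P : EuclideanSpace ℝ (Fin n) → EuclideanSpace ℝ (Fin n) be the linear map P u = u − (⟨v, u⟩ / ⟨v, v⟩) · v. Let S and S' be continuous p-multilinear forms on EuclideanSpace ℝ (Fin n) such that S'(W u₁, …, W u_p) = S(W (P u₁), …, W (P u_p)) for all u₁, …, u_p. Then sup_{‖u₁‖≤1,…,‖u_p‖≤1} |S'(W u₁, …, W u_p)| ≤ sup_{‖u₁‖≤1,…,‖u_p‖≤1} |S(W u₁, …, W u_p)|. -/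
open scoped InnerProductSpace

/-- The high-order secant (HOSU) least-change update does not increase the weighted norm. -/
theorem stmt_7 (n p : ℕ) (hn : 1 ≤ n) (hp : 1 ≤ p)
    (W W' : EuclideanSpace ℝ (Fin n) →L[ℝ] EuclideanSpace ℝ (Fin n))
    (hW : IsSelfAdjoint W)
    (hWpos : ∀ u : EuclideanSpace ℝ (Fin n), u ≠ 0 → 0 < ⟪W u, u⟫_ℝ)
    (hinv1 : ∀ u, W (W' u) = u) (hinv2 : ∀ u, W' (W u) = u)
    (s : EuclideanSpace ℝ (Fin n)) (hs : s ≠ 0)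
    (v : EuclideanSpace ℝ (Fin n)) (hv : v = W' s)
    (P : EuclideanSpace ℝ (Fin n) → EuclideanSpace ℝ (Fin n))
    (hP : ∀ u, P u = u - (⟪v, u⟫_ℝ / ⟪v, v⟫_ℝ) • v)
    (S S' : ContinuousMultilinearMap ℝ (fun _ : Fin p => EuclideanSpace ℝ (Fin n)) ℝ)
    (hSS' : ∀ u : Fin p → EuclideanSpace ℝ (Fin n),
      S' (fun i => W (u i)) = S (fun i => W (P (u i)))) :
    ‖S'.compContinuousLinearMap (fun _ => W)‖ ≤ ‖S.compContinuousLinearMap (fun _ => W)‖ := by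
  have hvne : v ≠ 0 := by
    intro h
    apply hs
    have := hinv1 s
    rw [← hv, h, map_zero] at this
    exact this.symm
  have hvv : (0:ℝ) < ⟪v, v⟫_ℝ := by
    have := real_inner_self_eq_norm_sq v
    have hn0 : 0 < ‖v‖ := norm_pos_iff.2 hvne
    nlinarith
  have key : ∀ u : EuclideanSpace ℝ (Fin n), ‖P u‖ ≤ ‖u‖ := by
    intro u
    rw [hP u]
    have expand : ‖u - (⟪v, u⟫_ℝ / ⟪v, v⟫_ℝ) • v‖ ^ 2
        = ‖u‖ ^ 2 - ⟪v, u⟫_ℝ ^ 2 / ⟪v, v⟫_ℝ := by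
      rw [norm_sub_sq_real, real_inner_smul_right, norm_smul, mul_pow,
        real_inner_comm u v, Real.norm_eq_abs, sq_abs,
        (real_inner_self_eq_norm_sq v).symm]
      set a := ⟪v, u⟫_ℝ
      set b := ⟪v, v⟫_ℝ
      have hb : b ≠ 0 := ne_of_gt hvv
      field_simp
      ring
    have hsq : ‖u - (⟪v, u⟫_ℝ / ⟪v, v⟫_ℝ) • v‖ ^ 2 ≤ ‖u‖ ^ 2 := by
      rw [expand]
      have : 0 ≤ ⟪v, u⟫_ℝ ^ 2 / ⟪v, v⟫_ℝ := div_nonneg (sq_nonneg _) hvv.le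
      linarith
    nlinarith [norm_nonneg (u - (⟪v, u⟫_ℝ / ⟪v, v⟫_ℝ) • v), norm_nonneg u]
  refine ContinuousMultilinearMap.opNorm_le_bound (norm_nonneg _) fun u => ?_
  have h1 : (S'.compContinuousLinearMap (fun _ => W)) u = S' (fun i => W (u i)) := rfl
  rw [h1, hSS' u]
  have h2 : S (fun i => W (P (u i)))
      = (S.compContinuousLinearMap (fun _ => W)) (fun i => P (u i)) := rfl
  rw [h2]
  refine le_trans (ContinuousMultilinearMap.le_opNorm _ _) ?_
  refine mul_le_mul_of_nonneg_left ?_ (norm_nonneg _)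
  exact Finset.prod_le_prod (fun i _ => norm_nonneg _) (fun i _ => key (u i))
end

section
/- Let n ≥ 1 and p ≥ 2 be integers, L ≥ 0 and h > 0 reals. Let D be a continuous p-multilinear form on EuclideanSpace ℝ (Fin n) that is symmetric (invariant under any permutation of its arguments), and for each i ∈ Fin n let G_i be a continuous (p−1)-multilinear form such that ‖G_i − h · D(·,…,·,e_i)‖ ≤ L h² / 2, where D(·,…,·,e_i) is the (p−1)-multilinear form obtained by fixing the last argument of D to the standard basis vector e_i. Define the continuous p-multilinear form A by A(u₁,…,u_p) = Σ_{i ∈ Fin n} (1/h) · G_i(u₁,…,u_{p−1}) · ⟨e_i, u_p⟩, and let P_sym(A) = (1/p!) Σ_{σ ∈ Perm(Fin p)} A_σ with A_σ(u₁,…,u_p) = A(u_{σ(1)},…,u_{σ(p)}). Then ‖P_sym(A) − D‖ ≤ √n · L · h / 2. -/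
open scoped InnerProductSpace

/-- Error bound for the symmetrized finite-difference approximation of a `p`-th derivative
tensor from `(p-1)`-st order information, with `p = q + 1 ≥ 2`. -/
theorem stmt_10 (n q : ℕ) (hn : 1 ≤ n) (hq : 1 ≤ q) (L h : ℝ) (hL : 0 ≤ L) (hh : 0 < h)
    (D : ContinuousMultilinearMap ℝ (fun _ : Fin (q + 1) => EuclideanSpace ℝ (Fin n)) ℝ)
    (hsym : ∀ (σ : Equiv.Perm (Fin (q + 1))) (u : Fin (q + 1) → EuclideanSpace ℝ (Fin n)),
      D (fun i => u (σ i)) = D u)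
    (G : Fin n → ContinuousMultilinearMap ℝ (fun _ : Fin q => EuclideanSpace ℝ (Fin n)) ℝ)
    (Di : Fin n → ContinuousMultilinearMap ℝ (fun _ : Fin q => EuclideanSpace ℝ (Fin n)) ℝ)
    (hDi : ∀ (i : Fin n) (u : Fin q → EuclideanSpace ℝ (Fin n)),
      Di i u = D (Fin.snoc u (EuclideanSpace.single i 1)))
    (hG : ∀ i, ‖G i - h • Di i‖ ≤ L * h ^ 2 / 2)
    (A : ContinuousMultilinearMap ℝ (fun _ : Fin (q + 1) => EuclideanSpace ℝ (Fin n)) ℝ)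
    (hA : ∀ u : Fin (q + 1) → EuclideanSpace ℝ (Fin n),
      A u = ∑ i : Fin n, (1 / h) * G i (fun j : Fin q => u j.castSucc) *
        ⟪EuclideanSpace.single i (1 : ℝ), u (Fin.last q)⟫_ℝ)
    (Aσ : Equiv.Perm (Fin (q + 1)) →
      ContinuousMultilinearMap ℝ (fun _ : Fin (q + 1) => EuclideanSpace ℝ (Fin n)) ℝ)
    (hAσ : ∀ (σ : Equiv.Perm (Fin (q + 1))) (u : Fin (q + 1) → EuclideanSpace ℝ (Fin n)),
      Aσ σ u = A (fun i => u (σ i))) :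
    ‖(((q + 1).factorial : ℝ)⁻¹) • (∑ σ : Equiv.Perm (Fin (q + 1)), Aσ σ) - D‖ ≤
      Real.sqrt n * L * h / 2 := by
  set C := Real.sqrt n * L * h / 2 with hC
  have hC0 : 0 ≤ C := by positivity
  -- ℓ¹–ℓ² comparison
  have hl1 : ∀ x : EuclideanSpace ℝ (Fin n), ∑ i, |x i| ≤ Real.sqrt n * ‖x‖ := by
    intro x
    have h1 : (∑ i, |x i|) ^ 2 ≤ (n : ℝ) * ∑ i, |x i| ^ 2 := by
      simpa using sq_sum_le_card_mul_sum_sq (s := Finset.univ) (f := fun i => |x i|)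
    have h2 : ∑ i, |x i| = Real.sqrt ((∑ i, |x i|) ^ 2) := by
      rw [Real.sqrt_sq (by positivity)]
    rw [h2]
    have h3 : Real.sqrt ((∑ i, |x i|) ^ 2) ≤ Real.sqrt ((n : ℝ) * ∑ i, |x i| ^ 2) :=
      Real.sqrt_le_sqrt h1
    refine h3.trans (le_of_eq ?_)
    rw [Real.sqrt_mul (by positivity), EuclideanSpace.norm_eq]
    simp [Real.norm_eq_abs]
  -- decomposition of D
  have hDu : ∀ u : Fin (q + 1) → EuclideanSpace ℝ (Fin n),
      D u = ∑ i : Fin n, (u (Fin.last q) i) * Di i (fun j => u j.castSucc) := by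
    intro u
    set w : Fin q → EuclideanSpace ℝ (Fin n) := fun j => u j.castSucc with hw
    set x : EuclideanSpace ℝ (Fin n) := u (Fin.last q) with hxx
    have hu : u = Fin.snoc w x := by
      funext j
      refine Fin.lastCases ?_ ?_ j
      · simp [hw, hxx]
      · intro j; simp [hw, Fin.snoc_castSucc]
    have hx : x = ∑ i : Fin n, (x i : ℝ) • (EuclideanSpace.single i 1 : EuclideanSpace ℝ (Fin n)) := by
      have := (EuclideanSpace.basisFun (Fin n) ℝ).sum_repr x
      simpa [EuclideanSpace.basisFun_apply, EuclideanSpace.basisFun_repr] using this.symm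
    calc D u = D (Fin.snoc w (∑ i : Fin n, (x i : ℝ) • (EuclideanSpace.single i 1 : EuclideanSpace ℝ (Fin n)))) := by
          rw [hu, ← hx]
      _ = ∑ i : Fin n, (x i) * Di i w := by
          have hswap : ∀ z : EuclideanSpace ℝ (Fin n),
              Function.update (Fin.snoc w x : Fin (q + 1) → EuclideanSpace ℝ (Fin n))
                (Fin.last q) z = Fin.snoc w z := by
            intro z; exact Fin.update_snoc_last (α := fun _ : Fin (q + 1) => EuclideanSpace ℝ (Fin n)) x w z
          have hsum := D.toMultilinearMap.map_update_sum (Finset.univ) (Fin.last q)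
            (fun i : Fin n => (x i : ℝ) • (EuclideanSpace.single i 1 : EuclideanSpace ℝ (Fin n)))
            (Fin.snoc w x)
          simp only [ContinuousMultilinearMap.coe_coe] at hsum
          rw [← hswap, hsum]
          refine Finset.sum_congr rfl fun i _ => ?_
          rw [D.map_update_smul, hswap, hDi]
          simp
  -- bound on ‖A - D‖
  have hAD : ‖A - D‖ ≤ C := by
    refine ContinuousMultilinearMap.opNorm_le_bound hC0 fun u => ?_
    set w : Fin q → EuclideanSpace ℝ (Fin n) := fun j => u j.castSucc with hw
    set x : EuclideanSpace ℝ (Fin n) := u (Fin.last q) with hxx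
    have hAu : (A - D) u = ∑ i : Fin n, ((1 / h) * ((G i - h • Di i) w)) * (x i) := by
      rw [ContinuousMultilinearMap.sub_apply, hA, hDu]
      rw [← Finset.sum_sub_distrib]
      refine Finset.sum_congr rfl fun i _ => ?_
      rw [EuclideanSpace.inner_single_left]
      simp only [ContinuousMultilinearMap.sub_apply, ContinuousMultilinearMap.smul_apply,
        smul_eq_mul, map_one, RCLike.star_def]
      field_simp
      ring
    have hterm : ∀ i : Fin n, |(1 / h) * ((G i - h • Di i) w)| ≤ L * h / 2 * ∏ j, ‖w j‖ := by
      intro i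
      have h1 : |((G i - h • Di i) w)| ≤ (L * h ^ 2 / 2) * ∏ j, ‖w j‖ := by
        calc |((G i - h • Di i) w)| ≤ ‖G i - h • Di i‖ * ∏ j, ‖w j‖ :=
              (G i - h • Di i).le_opNorm w
          _ ≤ (L * h ^ 2 / 2) * ∏ j, ‖w j‖ := by
              apply mul_le_mul_of_nonneg_right (hG i)
              positivity
      rw [abs_mul, abs_of_pos (by positivity : (0:ℝ) < 1 / h)]
      calc 1 / h * |((G i - h • Di i) w)| ≤ 1 / h * ((L * h ^ 2 / 2) * ∏ j, ‖w j‖) := by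
            apply mul_le_mul_of_nonneg_left h1; positivity
        _ = L * h / 2 * ∏ j, ‖w j‖ := by field_simp
    calc ‖(A - D) u‖ ≤ ∑ i : Fin n, |(1 / h) * ((G i - h • Di i) w)| * |x i| := by
          rw [hAu, Real.norm_eq_abs]
          refine (Finset.abs_sum_le_sum_abs _ _).trans (le_of_eq ?_)
          exact Finset.sum_congr rfl fun i _ => abs_mul _ _
      _ ≤ ∑ i : Fin n, (L * h / 2 * ∏ j, ‖w j‖) * |x i| := by
          refine Finset.sum_le_sum fun i _ => ?_
          exact mul_le_mul_of_nonneg_right (hterm i) (abs_nonneg _)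
      _ = (L * h / 2 * ∏ j, ‖w j‖) * ∑ i, |x i| := by rw [Finset.mul_sum]
      _ ≤ (L * h / 2 * ∏ j, ‖w j‖) * (Real.sqrt n * ‖x‖) := by
          apply mul_le_mul_of_nonneg_left (hl1 x); positivity
      _ = C * ((∏ j, ‖w j‖) * ‖x‖) := by rw [hC]; ring
      _ = C * ∏ i : Fin (q + 1), ‖u i‖ := by
          rw [Fin.prod_univ_castSucc]
  -- each symmetrized term
  have hσ : ∀ σ : Equiv.Perm (Fin (q + 1)), ‖Aσ σ - D‖ ≤ C := by
    intro σ
    refine ContinuousMultilinearMap.opNorm_le_bound hC0 fun u => ?_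
    have : (Aσ σ - D) u = (A - D) (fun i => u (σ i)) := by
      simp only [ContinuousMultilinearMap.sub_apply, hAσ, hsym]
    rw [this]
    calc ‖(A - D) (fun i => u (σ i))‖ ≤ ‖A - D‖ * ∏ i, ‖u (σ i)‖ := (A - D).le_opNorm _
      _ ≤ C * ∏ i, ‖u (σ i)‖ := by
          apply mul_le_mul_of_nonneg_right hAD; positivity
      _ = C * ∏ i, ‖u i‖ := by rw [Equiv.prod_comp σ fun i => ‖u i‖]
  -- conclusion
  have hcard : (Finset.univ : Finset (Equiv.Perm (Fin (q + 1)))).card = (q + 1).factorial := by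
    simp [Fintype.card_perm, Fintype.card_fin]
  have hfac : ((q + 1).factorial : ℝ) ≠ 0 := Nat.cast_ne_zero.mpr (Nat.factorial_ne_zero _)
  have key : (((q + 1).factorial : ℝ)⁻¹) • (∑ σ : Equiv.Perm (Fin (q + 1)), Aσ σ) - D =
      (((q + 1).factorial : ℝ)⁻¹) • (∑ σ : Equiv.Perm (Fin (q + 1)), (Aσ σ - D)) := by
    rw [Finset.sum_sub_distrib, smul_sub, Finset.sum_const, hcard]
    congr 1
    rw [← Nat.cast_smul_eq_nsmul ℝ, smul_smul, inv_mul_cancel₀ hfac, one_smul]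
  rw [key]
  calc ‖(((q + 1).factorial : ℝ)⁻¹) • (∑ σ : Equiv.Perm (Fin (q + 1)), (Aσ σ - D))‖
      ≤ (((q + 1).factorial : ℝ)⁻¹) * ‖∑ σ : Equiv.Perm (Fin (q + 1)), (Aσ σ - D)‖ := by
        have := norm_smul_le (((q + 1).factorial : ℝ)⁻¹)
          (∑ σ : Equiv.Perm (Fin (q + 1)), (Aσ σ - D))
        rwa [Real.norm_eq_abs, abs_of_pos (by positivity)] at this
    _ ≤ (((q + 1).factorial : ℝ)⁻¹) * ((q + 1).factorial * C) := by
        apply mul_le_mul_of_nonneg_left _ (by positivity)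
        calc ‖∑ σ : Equiv.Perm (Fin (q + 1)), (Aσ σ - D)‖
            ≤ ∑ σ : Equiv.Perm (Fin (q + 1)), ‖Aσ σ - D‖ := norm_sum_le _ _
          _ ≤ ∑ _σ : Equiv.Perm (Fin (q + 1)), C := Finset.sum_le_sum fun σ _ => hσ σ
          _ = (q + 1).factorial * C := by rw [Finset.sum_const, hcard, nsmul_eq_mul]
    _ = C := by field_simp
end

section
/- Let n ≥ 1 be an integer, μ > 0, L > 0, ς > 0 reals, and let s, y ∈ EuclideanSpace ℝ (Fin n) with s ≠ 0, μ‖s‖² ≤ ⟨s, y⟩ ≤ L‖s‖², and ‖y‖ ≤ L‖s‖. Then there exists an invertible self-adjoint positive definite continuous linear operator W on EuclideanSpace ℝ (Fin n) such that W(W y) = s (equivalently W⁻¹ W⁻¹ s = y) and ‖W‖ · ‖W⁻¹‖ ≤ max( √(1/μ) , √( L + (ς + L²)/μ ) · √( max( 1/ς , 1 , (ς + L²)/(μ ς) ) ) ). -/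
open scoped InnerProductSpace

set_option maxHeartbeats 1600000

/-- Construction of a weight matrix realizing the DFP update with bounded condition number. -/
theorem stmt_11 (n : ℕ) (hn : 1 ≤ n) (μ L ς : ℝ) (hμ : 0 < μ) (hL : 0 < L) (hς : 0 < ς)
    (s y : EuclideanSpace ℝ (Fin n)) (hs : s ≠ 0)
    (h1 : μ * ‖s‖ ^ 2 ≤ ⟪s, y⟫_ℝ) (h2 : ⟪s, y⟫_ℝ ≤ L * ‖s‖ ^ 2) (h3 : ‖y‖ ≤ L * ‖s‖) :
    ∃ W W' : EuclideanSpace ℝ (Fin n) →L[ℝ] EuclideanSpace ℝ (Fin n),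
      IsSelfAdjoint W ∧
      (∀ u : EuclideanSpace ℝ (Fin n), u ≠ 0 → 0 < ⟪W u, u⟫_ℝ) ∧
      (∀ u, W (W' u) = u) ∧ (∀ u, W' (W u) = u) ∧
      W (W y) = s ∧
      ‖W‖ * ‖W'‖ ≤ max (Real.sqrt (1 / μ))
        (Real.sqrt (L + (ς + L ^ 2) / μ) *
          Real.sqrt (max (1 / ς) (max 1 ((ς + L ^ 2) / (μ * ς))))) := by
  have hN : (0:ℝ) < ‖s‖ := norm_pos_iff.mpr hs
  have hN2 : (0:ℝ) < ‖s‖ ^ 2 := by positivity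
  set σ : ℝ := ⟪s, y⟫_ℝ with hσdef
  have hσ : 0 < σ := lt_of_lt_of_le (by positivity) h1
  set c₀ : ℝ := ς * ‖s‖ ^ 2 + ‖y‖ ^ 2 with hc₀def
  have hc₀ : 0 < c₀ := by positivity
  set t : ℝ := σ / c₀ with htdef
  have ht : 0 < t := div_pos hσ hc₀
  set d : ℝ := Real.sqrt t with hddef
  have hd : 0 < d := Real.sqrt_pos.mpr ht
  have hd2 : d ^ 2 = t := Real.sq_sqrt ht.le
  set u : EuclideanSpace ℝ (Fin n) := s - t • y with hudef
  have hsval : s = u + t • y := by rw [hudef]; abel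
  have hsu_eq : ⟪u, y⟫_ℝ = σ - t * ‖y‖ ^ 2 := by
    rw [hudef, inner_sub_left, real_inner_smul_left, real_inner_self_eq_norm_sq]
  set su : ℝ := ⟪u, y⟫_ℝ with hsudef
  have hsu_val : su = σ * (ς * ‖s‖ ^ 2) / c₀ := by
    rw [hsu_eq, htdef, hc₀def]
    field_simp
    ring
  have hsu : 0 < su := by rw [hsu_val]; positivity
  set nu : ℝ := ‖u‖ ^ 2 with hnudef
  have hnu : 0 ≤ nu := by positivity
  have hnu_val : nu = ‖s‖ ^ 2 - 2 * (t * σ) + t ^ 2 * ‖y‖ ^ 2 := by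
    rw [hnudef, hudef, norm_sub_sq_real, real_inner_smul_right, norm_smul]
    rw [Real.norm_eq_abs, abs_of_pos ht, mul_pow]
  set R : ℝ := Real.sqrt (t + nu / su) with hRdef
  have hR2 : R ^ 2 = t + nu / su := Real.sq_sqrt (by positivity)
  have hdR : d ≤ R := Real.sqrt_le_sqrt (le_add_of_nonneg_right (by positivity))
  have hR : 0 < R := lt_of_lt_of_le hd hdR
  set a : ℝ := (R - d) / nu with hadef
  have ha : 0 ≤ a := div_nonneg (by linarith) hnu
  have key1 : a * nu = R - d := by
    rcases eq_or_ne nu 0 with h | h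
    · have hRd : R = d := by rw [hRdef, hddef, h, zero_div, add_zero]
      rw [h, mul_zero, hRd, sub_self]
    · rw [hadef, div_mul_cancel₀ _ h]
  have ha0 : nu = 0 → a = 0 := by
    intro h
    have hRd : R = d := by rw [hRdef, hddef, h, zero_div, add_zero]
    rw [hadef, hRd, sub_self, zero_div]
  have key2 : nu ≠ 0 → 2 * a * d + a ^ 2 * nu = 1 / su := by
    intro h
    have h1' : 2 * a * d + a ^ 2 * nu = a * (d + R) := by
      have : a ^ 2 * nu = a * (a * nu) := by ring
      rw [this, key1]; ring
    rw [h1', hadef, div_mul_eq_mul_div]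
    have h2' : (R - d) * (d + R) = nu / su := by
      have : (R - d) * (d + R) = R ^ 2 - d ^ 2 := by ring
      rw [this, hR2, hd2]; ring
    rw [h2', div_div, eq_div_iff (by positivity)]
    field_simp
  set b : ℝ := -a / (d * R) with hbdef
  have hb : b ≤ 0 := div_nonpos_of_nonpos_of_nonneg (by linarith) (by positivity)
  have hbnu : b * nu = (d - R) / (d * R) := by
    rw [hbdef, div_mul_eq_mul_div, neg_mul, key1, neg_sub]
  clear_value σ c₀ t d u su nu R a b
  clear hadef hRdef hudef hsu_eq
  -- the rank-one projection-like operator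
  set P : EuclideanSpace ℝ (Fin n) →L[ℝ] EuclideanSpace ℝ (Fin n) :=
    (innerSL ℝ u).smulRight u with hPdef
  have hP : ∀ v, P v = ⟪u, v⟫_ℝ • u := fun v => by simp [hPdef]
  set W : EuclideanSpace ℝ (Fin n) →L[ℝ] EuclideanSpace ℝ (Fin n) :=
    d • (1 : EuclideanSpace ℝ (Fin n) →L[ℝ] EuclideanSpace ℝ (Fin n)) + a • P with hWdef
  set W' : EuclideanSpace ℝ (Fin n) →L[ℝ] EuclideanSpace ℝ (Fin n) :=
    d⁻¹ • (1 : EuclideanSpace ℝ (Fin n) →L[ℝ] EuclideanSpace ℝ (Fin n)) + b • P with hW'def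
  have hWapp : ∀ v, W v = d • v + (a * ⟪u, v⟫_ℝ) • u := by
    intro v
    rw [hWdef]
    simp [hP, mul_smul]
  have hW'app : ∀ v, W' v = d⁻¹ • v + (b * ⟪u, v⟫_ℝ) • u := by
    intro v
    rw [hW'def]
    simp [hP, mul_smul]
  -- coefficient identity for the inverse computation
  have hco : ∀ c : ℝ, d * (b * c) + a * (d⁻¹ * c + b * c * nu) = 0 := by
    intro c
    have hane : d * (b * c) + a * (d⁻¹ * c + b * c * nu)
        = c * (d * b + a * d⁻¹ + b * (a * nu)) := by ring
    have key1' : a * nu = R - d := key1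
    rw [hane, key1', hbdef]
    field_simp
    ring
  refine ⟨W, W', ?_, ?_, ?_, ?_, ?_, ?_⟩
  · -- self adjoint
    refine ContinuousLinearMap.isSelfAdjoint_iff_isSymmetric.mpr fun x z => ?_
    show ⟪W x, z⟫_ℝ = ⟪x, W z⟫_ℝ
    rw [hWapp, hWapp]
    rw [inner_add_left, inner_add_right, real_inner_smul_left, real_inner_smul_left,
      real_inner_smul_right, real_inner_smul_right]
    rw [real_inner_comm u x]
    ring
  · -- positive definite
    intro v hv
    rw [hWapp]
    simp only [inner_add_left, real_inner_smul_left]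
    rw [real_inner_self_eq_norm_sq]
    have hv2 : 0 < ‖v‖ ^ 2 := pow_pos (norm_pos_iff.mpr hv) 2
    linarith [mul_nonneg ha (mul_self_nonneg ⟪u, v⟫_ℝ), mul_pos hd hv2]
  · -- W ∘ W' = id
    intro v
    rw [hW'app, hWapp, inner_add_right, real_inner_smul_right, real_inner_smul_right,
      real_inner_self_eq_norm_sq, ← hnudef]
    rw [smul_add, smul_smul, smul_smul, mul_inv_cancel₀ hd.ne', one_smul]
    rw [add_assoc, ← add_smul]
    rw [hco, zero_smul, add_zero]
  · -- W' ∘ W = id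
    intro v
    rw [hWapp, hW'app, inner_add_right, real_inner_smul_right, real_inner_smul_right,
      real_inner_self_eq_norm_sq, ← hnudef]
    rw [smul_add, smul_smul, smul_smul, inv_mul_cancel₀ hd.ne', one_smul]
    rw [add_assoc, ← add_smul]
    have h0 : d⁻¹ * (a * ⟪u, v⟫_ℝ) + b * (d * ⟪u, v⟫_ℝ + a * ⟪u, v⟫_ℝ * nu)
        = d * (b * ⟪u, v⟫_ℝ) + a * (d⁻¹ * ⟪u, v⟫_ℝ + b * ⟪u, v⟫_ℝ * nu) := by ring
    rw [h0, hco, zero_smul, add_zero]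
  · -- W (W y) = s
    rw [hWapp, hWapp, inner_add_right, real_inner_smul_right, real_inner_smul_right,
      real_inner_self_eq_norm_sq, ← hnudef, ← hsudef]
    rw [smul_add, smul_smul, smul_smul]
    have hdd : d * d = t := by rw [← hd2]; ring
    rw [hdd, hsval]
    rw [add_assoc, ← add_smul, add_comm (t • y)]
    congr 1
    rcases eq_or_ne nu 0 with h | h
    · have hu0 : u = 0 := by
        have h' : ‖u‖ = 0 := (pow_eq_zero_iff two_ne_zero).mp (hnudef.symm.trans h)
        exact norm_eq_zero.mp h'
      rw [hu0, smul_zero]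
    · have hcoef : d * (a * su) + a * (d * su + a * su * nu) = 1 := by
        have he : d * (a * su) + a * (d * su + a * su * nu)
            = (2 * a * d + a ^ 2 * nu) * su := by ring
        rw [he, key2 h]
        field_simp
      rw [hcoef, one_smul]
  · -- norm bound
    have hWnorm : ‖W‖ ≤ R := by
      refine ContinuousLinearMap.opNorm_le_bound _ hR.le fun v => ?_
      have hsq : ‖W v‖ ^ 2 ≤ (R * ‖v‖) ^ 2 := by
        rw [hWapp, norm_add_sq_real, real_inner_smul_left, real_inner_smul_right,
          real_inner_comm v u]
        rw [norm_smul, norm_smul, Real.norm_eq_abs, Real.norm_eq_abs, mul_pow, mul_pow,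
          sq_abs, sq_abs, ← hnudef]
        have hkey : 2 * (d * (a * ⟪u, v⟫_ℝ * ⟪u, v⟫_ℝ)) + (a * ⟪u, v⟫_ℝ) ^ 2 * nu
            ≤ nu / su * ‖v‖ ^ 2 := by
          rcases eq_or_ne nu 0 with h | h
          · rw [ha0 h, h]
            simp
          · have hexp : 2 * (d * (a * ⟪u, v⟫_ℝ * ⟪u, v⟫_ℝ)) + (a * ⟪u, v⟫_ℝ) ^ 2 * nu
                = (2 * a * d + a ^ 2 * nu) * ⟪u, v⟫_ℝ ^ 2 := by ring
            rw [hexp, key2 h]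
            have hcs : ⟪u, v⟫_ℝ ^ 2 ≤ nu * ‖v‖ ^ 2 := by
              have h' := real_inner_mul_inner_self_le u v
              rw [real_inner_self_eq_norm_sq, real_inner_self_eq_norm_sq] at h'
              rw [hnudef, pow_two]
              exact h'
            calc 1 / su * ⟪u, v⟫_ℝ ^ 2 ≤ 1 / su * (nu * ‖v‖ ^ 2) :=
                  mul_le_mul_of_nonneg_left hcs (by positivity)
              _ = nu / su * ‖v‖ ^ 2 := by ring
        rw [real_inner_comm v u] at hkey
        have goalEq : (R * ‖v‖) ^ 2 = t * ‖v‖ ^ 2 + nu / su * ‖v‖ ^ 2 := by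
          rw [mul_pow, hR2]; ring
        have hd2' : d ^ 2 * ‖v‖ ^ 2 = t * ‖v‖ ^ 2 := by rw [hd2]
        linarith [hkey]
      calc ‖W v‖ = Real.sqrt (‖W v‖ ^ 2) := (Real.sqrt_sq (norm_nonneg _)).symm
        _ ≤ Real.sqrt ((R * ‖v‖) ^ 2) := Real.sqrt_le_sqrt hsq
        _ = R * ‖v‖ := Real.sqrt_sq (mul_nonneg hR.le (norm_nonneg _))
    have hW'norm : ‖W'‖ ≤ d⁻¹ := by
      refine ContinuousLinearMap.opNorm_le_bound _ (inv_nonneg.mpr hd.le) fun v => ?_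
      have hsq : ‖W' v‖ ^ 2 ≤ (d⁻¹ * ‖v‖) ^ 2 := by
        rw [hW'app, norm_add_sq_real, real_inner_smul_left, real_inner_smul_right,
          real_inner_comm v u]
        rw [norm_smul, norm_smul, Real.norm_eq_abs, Real.norm_eq_abs, mul_pow, mul_pow,
          sq_abs, sq_abs, ← hnudef]
        have hkey : 2 * (d⁻¹ * (b * ⟪u, v⟫_ℝ * ⟪u, v⟫_ℝ)) + (b * ⟪u, v⟫_ℝ) ^ 2 * nu ≤ 0 := by
          have hfac : 2 * (d⁻¹ * (b * ⟪u, v⟫_ℝ * ⟪u, v⟫_ℝ)) + (b * ⟪u, v⟫_ℝ) ^ 2 * nu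
              = ⟪u, v⟫_ℝ ^ 2 * (b * (2 * d⁻¹ + b * nu)) := by ring
          rw [hfac]
          have hpos : 0 ≤ 2 * d⁻¹ + b * nu := by
            rw [hbnu]
            have hsplit' : (d - R) / (d * R) = d / (d * R) - 1 / d := by
              field_simp
            rw [hsplit']
            have h1' : (0:ℝ) < d / (d * R) := by positivity
            have h2' : 1 / d ≤ 2 * d⁻¹ := by
              rw [one_div]
              linarith [inv_nonneg.mpr hd.le]
            linarith
          have h' : b * (2 * d⁻¹ + b * nu) ≤ 0 := mul_nonpos_of_nonpos_of_nonneg hb hpos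
          have h'' := mul_le_mul_of_nonneg_left h' (sq_nonneg ⟪u, v⟫_ℝ)
          simpa using h''
        rw [real_inner_comm v u] at hkey
        linarith [hkey]
      calc ‖W' v‖ = Real.sqrt (‖W' v‖ ^ 2) := (Real.sqrt_sq (norm_nonneg _)).symm
        _ ≤ Real.sqrt ((d⁻¹ * ‖v‖) ^ 2) := Real.sqrt_le_sqrt hsq
        _ = d⁻¹ * ‖v‖ := Real.sqrt_sq (mul_nonneg (inv_nonneg.mpr hd.le) (norm_nonneg _))
    -- final condition number bound
    have hfrac : (0:ℝ) ≤ R * d⁻¹ := mul_nonneg hR.le (inv_nonneg.mpr hd.le)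
    have hsq2 : (R * d⁻¹) ^ 2 = 1 + nu / (t * su) := by
      rw [mul_pow, hR2, inv_pow, hd2, add_mul, mul_inv_cancel₀ ht.ne', ← div_eq_mul_inv,
        div_div, mul_comm su t]
    have hCS : σ ≤ ‖s‖ * ‖y‖ := by rw [hσdef]; exact real_inner_le_norm s y
    have hY2 : ‖y‖ ^ 2 ≤ L ^ 2 * ‖s‖ ^ 2 := by
      have h' := pow_le_pow_left₀ (norm_nonneg y) h3 2
      rw [mul_pow] at h'
      exact h'
    have hc₀le : c₀ ≤ (ς + L ^ 2) * ‖s‖ ^ 2 := by rw [hc₀def]; linarith [hY2]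
    have hσ2le : σ ^ 2 ≤ ‖s‖ ^ 2 * c₀ := by
      have h' := pow_le_pow_left₀ hσ.le hCS 2
      rw [hc₀def]
      have h'' : (0:ℝ) ≤ ς * ‖s‖ ^ 4 := by positivity
      have h3' : (‖s‖ * ‖y‖) ^ 2 = ‖s‖ ^ 2 * ‖y‖ ^ 2 := by ring
      rw [h3'] at h'
      have h4' : ‖s‖ ^ 2 * (ς * ‖s‖ ^ 2 + ‖y‖ ^ 2) = ς * ‖s‖ ^ 4 + ‖s‖ ^ 2 * ‖y‖ ^ 2 := by ring
      linarith
    have e1 : 1 + nu / (t * su) = c₀ * (‖s‖ ^ 2 * c₀ - σ ^ 2) / (σ ^ 2 * (ς * ‖s‖ ^ 2)) := by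
      rw [hnu_val, hsu_val, htdef, hc₀def]
      have hne : ς * ‖s‖ ^ 2 + ‖y‖ ^ 2 ≠ 0 := by positivity
      field_simp
      ring
    have f1 : c₀ / σ ≤ (ς + L ^ 2) / μ := by
      rw [div_le_div_iff₀ hσ hμ]
      linarith [mul_le_mul_of_nonneg_right hc₀le hμ.le,
        mul_le_mul_of_nonneg_left h1 (by positivity : (0:ℝ) ≤ ς + L ^ 2)]
    have f2 : (‖s‖ ^ 2 * c₀ - σ ^ 2) / (σ * (ς * ‖s‖ ^ 2)) ≤ (ς + L ^ 2) / (μ * ς) := by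
      rw [div_le_div_iff₀ (by positivity) (by positivity)]
      linarith [mul_le_mul_of_nonneg_right hc₀le (by positivity : (0:ℝ) ≤ ‖s‖ ^ 2 * (μ * ς)),
        mul_le_mul_of_nonneg_left h1 (by positivity : (0:ℝ) ≤ (ς + L ^ 2) * (ς * ‖s‖ ^ 2)),
        mul_nonneg (sq_nonneg σ) (mul_pos hμ hς).le]
    have hsplit : c₀ * (‖s‖ ^ 2 * c₀ - σ ^ 2) / (σ ^ 2 * (ς * ‖s‖ ^ 2))
        = (c₀ / σ) * ((‖s‖ ^ 2 * c₀ - σ ^ 2) / (σ * (ς * ‖s‖ ^ 2))) := by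
      rw [div_mul_div_comm]
      ring
    have hK : (R * d⁻¹) ^ 2 ≤ ((ς + L ^ 2) / μ) * ((ς + L ^ 2) / (μ * ς)) := by
      rw [hsq2, e1, hsplit]
      refine mul_le_mul f1 f2 ?_ (by positivity)
      exact div_nonneg (by linarith) (by positivity)
    have h5 : R * d⁻¹ ≤ Real.sqrt (((ς + L ^ 2) / μ) * ((ς + L ^ 2) / (μ * ς))) := by
      calc R * d⁻¹ = Real.sqrt ((R * d⁻¹) ^ 2) := (Real.sqrt_sq hfrac).symm
        _ ≤ _ := Real.sqrt_le_sqrt hK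
    have h6 : Real.sqrt (((ς + L ^ 2) / μ) * ((ς + L ^ 2) / (μ * ς)))
        = Real.sqrt ((ς + L ^ 2) / μ) * Real.sqrt ((ς + L ^ 2) / (μ * ς)) :=
      Real.sqrt_mul (by positivity) _
    have h7 : Real.sqrt ((ς + L ^ 2) / μ) ≤ Real.sqrt (L + (ς + L ^ 2) / μ) :=
      Real.sqrt_le_sqrt (by linarith)
    have h8 : Real.sqrt ((ς + L ^ 2) / (μ * ς))
        ≤ Real.sqrt (max (1 / ς) (max 1 ((ς + L ^ 2) / (μ * ς)))) :=
      Real.sqrt_le_sqrt (le_max_of_le_right (le_max_right _ _))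
    calc ‖W‖ * ‖W'‖ ≤ R * d⁻¹ := mul_le_mul hWnorm hW'norm (norm_nonneg _) hR.le
      _ ≤ Real.sqrt ((ς + L ^ 2) / μ) * Real.sqrt ((ς + L ^ 2) / (μ * ς)) := by
          rw [← h6]; exact h5
      _ ≤ Real.sqrt (L + (ς + L ^ 2) / μ)
          * Real.sqrt (max (1 / ς) (max 1 ((ς + L ^ 2) / (μ * ς)))) :=
        mul_le_mul h7 h8 (Real.sqrt_nonneg _) (Real.sqrt_nonneg _)
      _ ≤ _ := le_max_right _ _
end

section
/- Let n ≥ 1 be an integer, g, s ∈ EuclideanSpace ℝ (Fin n), σ > 0 a real, and B a self-adjoint continuous linear operator on EuclideanSpace ℝ (Fin n). Set χ = sup_{‖d‖=1} max(0, −⟨B d, d⟩). If ⟨g, s⟩ + (1/2)⟨B s, s⟩ + (σ/6)‖s‖³ ≤ 0, then ‖s‖ ≤ 2 · max( (6‖g‖/σ)^{1/2} , 3χ/σ ). -/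
/-!
Testing the inner-product bound on the unit vector `s / ‖s‖` gives `-⟪B s, s⟫ ≤ χ ‖s‖²`, and
Cauchy–Schwarz gives `-⟪g, s⟫ ≤ ‖g‖ ‖s‖`, so the decrease condition yields
`σ t³ ≤ 6 ‖g‖ t + 3 χ t²` for `t = ‖s‖`. With `M` the maximum in the bound, `6 ‖g‖ ≤ σ M²` and
`3 χ ≤ σ M`, hence `t² ≤ M² + M t`, which forces `t ≤ 2 M`.
-/

open scoped InnerProductSpace

section Curvature

variable {E : Type*} [NormedAddCommGroup E] [InnerProductSpace ℝ E]

noncomputable def negCurvature (B : E →L[ℝ] E) : ℝ :=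
  sSup {r : ℝ | ∃ d : E, ‖d‖ = 1 ∧ r = max 0 (-⟪B d, d⟫_ℝ)}

theorem bddAbove_max_zero_neg_inner_unit (B : E →L[ℝ] E) :
    BddAbove {r : ℝ | ∃ d : E, ‖d‖ = 1 ∧ r = max 0 (-⟪B d, d⟫_ℝ)} := by
  refine ⟨max 0 ‖B‖, ?_⟩
  rintro r ⟨d, hd, rfl⟩
  refine max_le_max le_rfl ?_
  calc -⟪B d, d⟫_ℝ ≤ ‖B d‖ * ‖d‖ := (neg_le_abs _).trans (abs_real_inner_le_norm _ _)
    _ ≤ ‖B‖ * ‖d‖ * ‖d‖ := by gcongr; exact B.le_opNorm d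
    _ = ‖B‖ := by rw [hd, mul_one, mul_one]

theorem neg_inner_le_negCurvature_mul_norm_sq (B : E →L[ℝ] E) (v : E) :
    -⟪B v, v⟫_ℝ ≤ negCurvature B * ‖v‖ ^ 2 := by
  rcases eq_or_ne v 0 with rfl | hv
  · simp
  set u := ‖v‖⁻¹ • v
  have hu : ‖u‖ = 1 := norm_smul_inv_norm hv
  have hle : -⟪B u, u⟫_ℝ ≤ negCurvature B :=
    (le_max_right _ _).trans (le_csSup (bddAbove_max_zero_neg_inner_unit B) ⟨u, hu, rfl⟩)
  have hscale : ⟪B u, u⟫_ℝ = ‖v‖⁻¹ ^ 2 * ⟪B v, v⟫_ℝ := by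
    simp only [u, map_smul, real_inner_smul_left, real_inner_smul_right]
    ring
  rw [hscale] at hle
  calc -⟪B v, v⟫_ℝ = ‖v‖ ^ 2 * -(‖v‖⁻¹ ^ 2 * ⟪B v, v⟫_ℝ) := by field_simp
    _ ≤ ‖v‖ ^ 2 * negCurvature B := by gcongr
    _ = negCurvature B * ‖v‖ ^ 2 := mul_comm _ _

theorem cubic_le_of_cubic_model_nonpos (g s : E) (B : E →L[ℝ] E) (σ : ℝ)
    (hdec : ⟪g, s⟫_ℝ + (1 / 2) * ⟪B s, s⟫_ℝ + (σ / 6) * ‖s‖ ^ 3 ≤ 0) :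
    σ * ‖s‖ ^ 3 ≤ 6 * ‖g‖ * ‖s‖ + 3 * negCurvature B * ‖s‖ ^ 2 := by
  have hgs : -⟪g, s⟫_ℝ ≤ ‖g‖ * ‖s‖ := (neg_le_abs _).trans (abs_real_inner_le_norm _ _)
  linarith [neg_inner_le_negCurvature_mul_norm_sq B s]

end Curvature

theorem le_two_mul_of_cubic_le {σ a c t M : ℝ} (hσ : 0 < σ) (hM : 0 ≤ M) (ht : 0 ≤ t)
    (ha : 6 * a ≤ σ * M ^ 2) (hc : 3 * c ≤ σ * M)
    (hcubic : σ * t ^ 3 ≤ 6 * a * t + 3 * c * t ^ 2) :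
    t ≤ 2 * M := by
  by_contra! hlt
  have ht0 : 0 < t := by linarith
  have hquad : t ^ 2 ≤ M ^ 2 + M * t := by
    have : σ * t * t ^ 2 ≤ σ * t * (M ^ 2 + M * t) := by
      nlinarith [mul_le_mul_of_nonneg_right ha ht, mul_le_mul_of_nonneg_right hc (sq_nonneg t)]
    exact le_of_mul_le_mul_left this (mul_pos hσ ht0)
  -- `t² - M t - M² = (t - 2 M) (t + M) + M²`
  nlinarith [mul_pos (sub_pos.mpr hlt) (add_pos_of_pos_of_nonneg ht0 hM)]

theorem le_two_mul_max_sqrt_of_cubic_le {σ a c t : ℝ} (hσ : 0 < σ) (ht : 0 ≤ t)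
    (hcubic : σ * t ^ 3 ≤ 6 * a * t + 3 * c * t ^ 2) :
    t ≤ 2 * max (Real.sqrt (6 * a / σ)) (3 * c / σ) := by
  set M := max (Real.sqrt (6 * a / σ)) (3 * c / σ)
  have hM : 0 ≤ M := (Real.sqrt_nonneg _).trans (le_max_left _ _)
  refine le_two_mul_of_cubic_le hσ hM ht ?_ ?_ hcubic
  · exact (div_le_iff₀' hσ).mp ((Real.sqrt_le_left hM).mp (le_max_left _ _))
  · exact (div_le_iff₀' hσ).mp (le_max_right _ _)

theorem stmt_12_general (n : ℕ)
    (g s : EuclideanSpace ℝ (Fin n)) (σ : ℝ) (hσ : 0 < σ)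
    (B : EuclideanSpace ℝ (Fin n) →L[ℝ] EuclideanSpace ℝ (Fin n))
    (χ : ℝ)
    (hχ : χ = sSup {r : ℝ |
      ∃ d : EuclideanSpace ℝ (Fin n), ‖d‖ = 1 ∧ r = max 0 (-⟪B d, d⟫_ℝ)})
    (hdec : ⟪g, s⟫_ℝ + (1 / 2) * ⟪B s, s⟫_ℝ + (σ / 6) * ‖s‖ ^ 3 ≤ 0) :
    ‖s‖ ≤ 2 * max (Real.sqrt (6 * ‖g‖ / σ)) (3 * χ / σ) := by
  have hcubic := cubic_le_of_cubic_model_nonpos g s B σ hdec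
  rw [show negCurvature B = χ from hχ.symm] at hcubic
  exact le_two_mul_max_sqrt_of_cubic_le hσ (norm_nonneg s) hcubic

/-- Step-length bound for the cubic-regularized quadratic model with inexact Hessian. -/
theorem stmt_12 (n : ℕ) (hn : 1 ≤ n)
    (g s : EuclideanSpace ℝ (Fin n)) (σ : ℝ) (hσ : 0 < σ)
    (B : EuclideanSpace ℝ (Fin n) →L[ℝ] EuclideanSpace ℝ (Fin n))
    (hB : IsSelfAdjoint B)
    (χ : ℝ)
    (hχ : χ = sSup {r : ℝ |
      ∃ d : EuclideanSpace ℝ (Fin n), ‖d‖ = 1 ∧ r = max 0 (-⟪B d, d⟫_ℝ)})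
    (hdec : ⟪g, s⟫_ℝ + (1 / 2) * ⟪B s, s⟫_ℝ + (σ / 6) * ‖s‖ ^ 3 ≤ 0) :
    ‖s‖ ≤ 2 * max (Real.sqrt (6 * ‖g‖ / σ)) (3 * χ / σ) :=
  stmt_12_general n g s σ hσ B χ hχ hdec
end

section
/- Under the p-th order inexact adaptive regularization framework described in the context (p ≥ 3), the sequence of regularization parameters is bounded: there exists σ_max ∈ ℝ such that σ_k ≤ σ_max for every k ≥ 0. -/
/-!
Taylor's theorem with a Lipschitz `p`-th derivative, the accuracy condition on `T_k` (through
`a * b ^ p ≤ a ^ (p + 1) + b ^ (p + 1)`) and the model decrease give, with `w_k = ‖s_k‖ ^ (p + 1)`,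
`σ_k w_k ≤ (p + 1)! (f x_k - f x_{k+1}) + (p + 1) (κ_D ξ_k + (L_p + 1) w_k)`.
Summing, using `f ≥ f_low` and `∑_{k<K} ξ_k ≤ M ∑_{k<K} w_k + M²` (`M = 2m - 1`), yields
`∑_{k<K} σ_k w_k ≤ D + C ∑_{k<K} w_k`. As `σ` is nondecreasing with increments `σ_k w_k`, once
`σ_t ≥ 2C` the right-hand side grows at most half as fast as the left one, which bounds `σ`.
-/

open Finset

variable {E : Type*} [NormedAddCommGroup E] [NormedSpace ℝ E]

theorem iteratedDeriv_comp_line {F : Type*} [NormedAddCommGroup F] [NormedSpace ℝ F]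
    {N : WithTop ℕ∞} {f : E → F} (hf : ContDiff ℝ N f) (x s : E) {i : ℕ} (hi : i ≤ N) (t : ℝ) :
    iteratedDeriv i (fun t : ℝ => f (x + t • s)) t =
      iteratedFDeriv ℝ i f (x + t • s) (fun _ => s) := by
  have hcomp : (fun t : ℝ => f (x + t • s)) =
      (fun z => f (x + z)) ∘ ContinuousLinearMap.toSpanSingleton ℝ s := rfl
  have hshift : ContDiff ℝ N (fun z => f (x + z)) := hf.comp (contDiff_const.add contDiff_id)
  rw [iteratedDeriv_eq_iteratedFDeriv, hcomp,
    ContinuousLinearMap.iteratedFDeriv_comp_right _ hshift _ hi,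
    ContinuousMultilinearMap.compContinuousLinearMap_apply, iteratedFDeriv_comp_add_left]
  simp

theorem ContinuousMultilinearMap.apply_diag_le_add {k : ℕ}
    (A B : ContinuousMultilinearMap ℝ (fun _ : Fin k => E) ℝ) (s : E) :
    A (fun _ => s) ≤ B (fun _ => s) + ‖A - B‖ * ‖s‖ ^ k := by
  have h := (A - B).le_opNorm (fun _ => s)
  simp only [prod_const, card_univ, Fintype.card_fin, sub_apply, Real.norm_eq_abs] at h
  linarith [le_abs_self (A (fun _ => s) - B (fun _ => s))]

theorem sum_range_eq_add_sum_Icc {M : Type*} [AddCommMonoid M] (u : ℕ → M) {P : ℕ}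
    (hP : 1 ≤ P) :
    ∑ i ∈ range P, u i = u 0 + ∑ i ∈ Icc 1 (P - 1), u i := by
  obtain ⟨P, rfl⟩ := Nat.exists_eq_add_of_le' hP
  rw [sum_range_succ', add_comm, Nat.add_sub_cancel, range_eq_Ico, sum_Ico_add', zero_add,
    Finset.Ico_add_one_right_eq_Icc]

theorem taylor_le_of_lipschitz_iteratedFDeriv {P : ℕ} (hP : 1 ≤ P) {f : E → ℝ}
    (hf : ContDiff ℝ P f) {L : ℝ} (hL : 0 ≤ L)
    (hlip : ∀ x y, ‖iteratedFDeriv ℝ P f x - iteratedFDeriv ℝ P f y‖ ≤ L * ‖x - y‖) (x s : E) :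
    f (x + s) ≤ f x +
      (∑ i ∈ Icc 1 (P - 1), (1 / (i.factorial : ℝ)) * iteratedFDeriv ℝ i f x (fun _ => s)) +
      (1 / (P.factorial : ℝ)) * iteratedFDeriv ℝ P f x (fun _ => s) +
      L / (P.factorial : ℝ) * ‖s‖ ^ (P + 1) := by
  set g : ℝ → ℝ := fun t => f (x + t • s)
  have hg : ContDiff ℝ P g := hf.comp (contDiff_const.add (contDiff_id.smul contDiff_const))
  have hP' : P - 1 + 1 = P := Nat.sub_add_cancel hP
  obtain ⟨c, hc, hTaylor⟩ := taylor_mean_remainder_lagrange_iteratedDeriv (f := g) (n := P - 1)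
    (x₀ := 0) (x := 1) zero_ne_one (by exact_mod_cast hP'.symm ▸ hg.contDiffOn)
  rw [Set.uIcc_of_le zero_le_one, taylor_within_apply, hP'] at hTaylor
  rw [Set.uIoo_of_le zero_le_one] at hc
  have hcoeff : ∀ k ≤ P,
      iteratedDerivWithin k g (Set.Icc 0 1) 0 = iteratedFDeriv ℝ k f x (fun _ => s) := by
    intro k hk
    rw [iteratedDerivWithin_eq_iteratedDeriv (uniqueDiffOn_Icc zero_lt_one)
      ((hg.of_le (by exact_mod_cast hk)).contDiffAt) ⟨le_rfl, zero_le_one⟩,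
      iteratedDeriv_comp_line hf x s (by exact_mod_cast hk)]
    simp
  have hpoly : ∑ k ∈ range P, ((k.factorial : ℝ)⁻¹ * (1 - 0) ^ k) •
      iteratedDerivWithin k g (Set.Icc 0 1) 0 = f x +
      ∑ i ∈ Icc 1 (P - 1), (1 / (i.factorial : ℝ)) * iteratedFDeriv ℝ i f x (fun _ => s) := by
    rw [sum_range_eq_add_sum_Icc _ hP]
    refine congrArg₂ (· + ·) (by simp [hcoeff 0 (Nat.zero_le _)]) (sum_congr rfl fun i hi => ?_)
    rw [hcoeff i ((mem_Icc.1 hi).2.trans (Nat.sub_le _ _))]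
    simp
  have hrem : iteratedDeriv P g c ≤
      iteratedFDeriv ℝ P f x (fun _ => s) + L * ‖s‖ ^ (P + 1) := by
    rw [iteratedDeriv_comp_line hf x s le_rfl]
    refine (ContinuousMultilinearMap.apply_diag_le_add _ (iteratedFDeriv ℝ P f x) s).trans ?_
    have hcs : ‖x + c • s - x‖ ≤ ‖s‖ := by
      rw [add_sub_cancel_left, norm_smul, Real.norm_of_nonneg hc.1.le]
      exact mul_le_of_le_one_left (norm_nonneg s) hc.2.le
    have hdiff := (hlip (x + c • s) x).trans (mul_le_mul_of_nonneg_left hcs hL)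
    calc _ ≤ _ + L * ‖s‖ * ‖s‖ ^ P := by gcongr
      _ = _ := by ring
  have hg1 : g 1 = f (x + s) := by simp [g]
  rw [hpoly, hg1, sub_zero, one_pow, mul_one] at hTaylor
  have hremP : iteratedDeriv P g c / P.factorial ≤ 1 / (P.factorial : ℝ) *
      iteratedFDeriv ℝ P f x (fun _ => s) + L / (P.factorial : ℝ) * ‖s‖ ^ (P + 1) :=
    calc _ ≤ (iteratedFDeriv ℝ P f x (fun _ => s) + L * ‖s‖ ^ (P + 1)) / P.factorial := by
          gcongr
      _ = _ := by ring
  linarith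

theorem mul_pow_le_pow_succ_add_pow_succ {a b : ℝ} (ha : 0 ≤ a) (hb : 0 ≤ b) (k : ℕ) :
    a * b ^ k ≤ a ^ (k + 1) + b ^ (k + 1) := by
  rcases le_total a b with h | h
  · calc a * b ^ k ≤ b * b ^ k := by gcongr
      _ = b ^ (k + 1) := (pow_succ' b k).symm
      _ ≤ _ := le_add_of_nonneg_left (by positivity)
  · calc a * b ^ k ≤ a * a ^ k := by gcongr
      _ = a ^ (k + 1) := (pow_succ' a k).symm
      _ ≤ _ := le_add_of_nonneg_right (by positivity)

theorem mul_norm_pow_le_of_model_decrease {P : ℕ} (hP : 1 ≤ P) {f : E → ℝ}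
    (hf : ContDiff ℝ P f) {L : ℝ} (hL : 0 ≤ L)
    (hlip : ∀ x y, ‖iteratedFDeriv ℝ P f x - iteratedFDeriv ℝ P f y‖ ≤ L * ‖x - y‖) (x s : E)
    (T : ContinuousMultilinearMap ℝ (fun _ : Fin P => E) ℝ) {σ ε : ℝ}
    (hT : ‖T - iteratedFDeriv ℝ P f x‖ ^ (P + 1) ≤ ε)
    (hmodel : (∑ i ∈ Icc 1 (P - 1),
        (1 / (i.factorial : ℝ)) * iteratedFDeriv ℝ i f x (fun _ => s)) +
      (1 / (P.factorial : ℝ)) * T (fun _ => s) +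
      (σ / ((P + 1).factorial : ℝ)) * ‖s‖ ^ (P + 1) ≤ 0) :
    σ * ‖s‖ ^ (P + 1) ≤ (P + 1).factorial * (f x - f (x + s)) +
      (P + 1) * (ε + (L + 1) * ‖s‖ ^ (P + 1)) := by
  have htaylor := taylor_le_of_lipschitz_iteratedFDeriv hP hf hL hlip x s
  have hT' : iteratedFDeriv ℝ P f x (fun _ => s) ≤ T (fun _ => s) + ε + ‖s‖ ^ (P + 1) := by
    refine (ContinuousMultilinearMap.apply_diag_le_add _ T s).trans ?_
    rw [norm_sub_rev]
    linarith [mul_pow_le_pow_succ_add_pow_succ (norm_nonneg (T - iteratedFDeriv ℝ P f x))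
      (norm_nonneg s) P]
  have hfac : ((P + 1).factorial : ℝ) = (P + 1) * P.factorial := by
    push_cast [Nat.factorial_succ]; ring
  have hPpos : (0 : ℝ) < P.factorial := by exact_mod_cast P.factorial_pos
  have hdecrease : σ / ((P + 1).factorial : ℝ) * ‖s‖ ^ (P + 1) ≤
      f x - f (x + s) + 1 / (P.factorial : ℝ) * (ε + (L + 1) * ‖s‖ ^ (P + 1)) := by
    have := mul_le_mul_of_nonneg_left hT' (one_div_nonneg.2 hPpos.le)
    have hL' : L / (P.factorial : ℝ) = 1 / P.factorial * L := by ring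
    rw [hL'] at htaylor
    linarith
  calc σ * ‖s‖ ^ (P + 1)
        = (P + 1).factorial * (σ / ((P + 1).factorial : ℝ) * ‖s‖ ^ (P + 1)) := by field_simp
    _ ≤ (P + 1).factorial * (f x - f (x + s) +
        1 / (P.factorial : ℝ) * (ε + (L + 1) * ‖s‖ ^ (P + 1))) := by gcongr
    _ = _ := by rw [hfac]; field_simp

theorem sum_range_lag_le {w : ℕ → ℝ} (hw : ∀ k, 0 ≤ w k) (i K : ℕ) :
    ∑ k ∈ range K, (if i ≤ k then w (k - i) else 1) ≤ ∑ k ∈ range K, w k + i := by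
  have hsum : 0 ≤ ∑ k ∈ range K, w k := sum_nonneg fun k _ => hw k
  rcases le_total K i with hK | hK
  · rw [sum_congr rfl fun k hk => if_neg (by simp at hk; omega)]
    simp only [sum_const, card_range, nsmul_eq_mul, mul_one]
    have : (K : ℝ) ≤ i := by exact_mod_cast hK
    linarith
  · obtain ⟨j, rfl⟩ := Nat.exists_eq_add_of_le hK
    rw [sum_range_add, sum_congr rfl fun k hk => if_neg (by simp at hk; omega),
      sum_congr rfl fun k _ => if_pos (Nat.le_add_right i k)]
    simp only [sum_const, card_range, nsmul_eq_mul, mul_one, Nat.add_sub_cancel_left]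
    have : ∑ k ∈ range j, w k ≤ ∑ k ∈ range (i + j), w k :=
      sum_le_sum_of_subset_of_nonneg (range_subset_range.2 (Nat.le_add_left j i))
        fun k _ _ => hw k
    linarith

theorem sum_range_sum_lag_le {w : ℕ → ℝ} (hw : ∀ k, 0 ≤ w k) (M K : ℕ) :
    ∑ k ∈ range K, ∑ i ∈ Icc 1 M, (if i ≤ k then w (k - i) else 1) ≤
      M * (∑ k ∈ range K, w k + M) := by
  rw [sum_comm]
  calc _ ≤ ∑ i ∈ Icc 1 M, (∑ k ∈ range K, w k + M) :=
        sum_le_sum fun i hi => (sum_range_lag_le hw i K).trans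
          (by gcongr; exact_mod_cast (mem_Icc.1 hi).2)
    _ = _ := by simp [mul_add]

theorem exists_forall_le_of_sum_mul_le {σ W : ℕ → ℝ} {C D : ℝ} (hσ0 : 0 ≤ σ 0)
    (hW : ∀ k, 0 ≤ W k) (hσ : ∀ k, σ (k + 1) = σ k + σ k * W k)
    (hle : ∀ K, ∑ k ∈ range K, σ k * W k ≤ D + C * ∑ k ∈ range K, W k) :
    ∃ B, ∀ k, σ k ≤ B := by
  have hnonneg : ∀ k, 0 ≤ σ k := by
    intro k
    induction k with
    | zero => exact hσ0
    | succ k ih => rw [hσ]; have := mul_nonneg ih (hW k); linarith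
  have hmono : Monotone σ := monotone_nat_of_le_succ fun k => by
    rw [hσ]; have := mul_nonneg (hnonneg k) (hW k); linarith
  have htel : ∀ K, σ K = σ 0 + ∑ k ∈ range K, σ k * W k := fun K => by
    rw [← sum_congr rfl fun k _ => (sub_eq_of_eq_add' (hσ k)), sum_range_sub]
    ring
  by_cases hlarge : ∃ t, 2 * C ≤ σ t
  swap
  · simp only [not_exists, not_le] at hlarge
    exact ⟨2 * C, fun k => (hlarge k).le⟩
  obtain ⟨t, ht⟩ := hlarge
  have hgrowth : ∀ K, σ t * ∑ k ∈ Ico t K, W k ≤ ∑ k ∈ Ico t K, σ k * W k := by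
    intro K
    rw [mul_sum]
    exact sum_le_sum fun k hk => mul_le_mul_of_nonneg_right (hmono (mem_Ico.1 hk).1) (hW k)
  refine ⟨max (σ t) (σ 0 + 2 * (D + C * ∑ k ∈ range t, W k)), fun K => ?_⟩
  rcases le_total K t with hK | hK
  · exact (hmono hK).trans (le_max_left _ _)
  · refine le_max_of_le_right ?_
    have hIco : 0 ≤ ∑ k ∈ Ico t K, W k := sum_nonneg fun k _ => hW k
    have hR : 0 ≤ ∑ k ∈ range t, σ k * W k :=
      sum_nonneg fun k _ => mul_nonneg (hnonneg k) (hW k)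
    have := hle K
    rw [← sum_range_add_sum_Ico _ hK, ← sum_range_add_sum_Ico _ hK, mul_add] at this
    rw [htel, ← sum_range_add_sum_Ico _ hK]
    -- past `t`, `C * W k ≤ σ k * W k / 2`, so the tail of the sums is absorbed by the left side
    nlinarith [hgrowth K]

open scoped InnerProductSpace

theorem stmt_14_general (p n m : ℕ) (hp : 3 ≤ p)
    (f : EuclideanSpace ℝ (Fin n) → ℝ)
    (hf : ContDiff ℝ (p : ℕ∞) f)
    (f_low : ℝ) (hflow : ∀ x, f_low ≤ f x)
    (Lp : ℝ) (hLp : 3 ≤ Lp)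
    (hA3 : ∀ x y, ‖iteratedFDeriv ℝ p f x - iteratedFDeriv ℝ p f y‖ ≤ Lp * ‖x - y‖)
    (σ₀ κD : ℝ) (hσ₀ : 0 < σ₀)
    (hκD : 0 ≤ κD)
    (x s : ℕ → EuclideanSpace ℝ (Fin n))
    (T : ℕ → ContinuousMultilinearMap ℝ (fun _ : Fin p => EuclideanSpace ℝ (Fin n)) ℝ)
    (σ : ℕ → ℝ) (hσ0 : σ 0 = σ₀)
    (hx : ∀ k, x (k + 1) = x k + s k)
    (hσrec : ∀ k, σ (k + 1) = σ k + σ k * ‖s k‖ ^ (p + 1))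
    (ξ : ℕ → ℝ)
    (hξ : ∀ k, ξ k = ∑ i ∈ Finset.Icc 1 (2 * m - 1),
      if i ≤ k then ‖s (k - i)‖ ^ (p + 1) else 1)
    (ha : ∀ k, ‖T k - iteratedFDeriv ℝ p f (x k)‖ ^ (p + 1) ≤ κD * ξ k)
    (hb : ∀ k,
      (∑ i ∈ Finset.Icc 1 (p - 1),
        (1 / (i.factorial : ℝ)) * iteratedFDeriv ℝ i f (x k) (fun _ => s k)) +
      (1 / (p.factorial : ℝ)) * T k (fun _ => s k) +
      (σ k / ((p + 1).factorial : ℝ)) * ‖s k‖ ^ (p + 1) ≤ 0) :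
    ∃ σmax : ℝ, ∀ k : ℕ, σ k ≤ σmax := by
  set W : ℕ → ℝ := fun k => ‖s k‖ ^ (p + 1)
  set M : ℝ := ((2 * m - 1 : ℕ) : ℝ)
  have hW : ∀ k, 0 ≤ W k := fun k => by positivity
  have hstep : ∀ k, σ k * W k ≤ (p + 1).factorial * (f (x k) - f (x (k + 1))) +
      (p + 1) * (κD * ξ k + (Lp + 1) * W k) := fun k => by
    rw [hx]
    exact mul_norm_pow_le_of_model_decrease (by omega) hf (by linarith) hA3 _ _ (T k) (ha k) (hb k)
  have hξsum : ∀ K, ∑ k ∈ range K, ξ k ≤ M * (∑ k ∈ range K, W k + M) := fun K => by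
    simp only [hξ]
    exact sum_range_sum_lag_le hW _ K
  refine exists_forall_le_of_sum_mul_le (C := (p + 1) * (κD * M + Lp + 1))
    (D := (p + 1).factorial * (f (x 0) - f_low) + (p + 1) * κD * M * M)
    (hσ0 ▸ hσ₀.le) hW hσrec fun K => ?_
  have hsum : ∑ k ∈ range K, σ k * W k ≤ (p + 1).factorial * (f (x 0) - f (x K)) +
      (p + 1) * (κD * ∑ k ∈ range K, ξ k + (Lp + 1) * ∑ k ∈ range K, W k) := by
    calc _ ≤ ∑ k ∈ range K, ((p + 1).factorial * (f (x k) - f (x (k + 1))) +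
          (p + 1) * (κD * ξ k + (Lp + 1) * W k)) := sum_le_sum fun k _ => hstep k
      _ = _ := by
        rw [sum_add_distrib, ← mul_sum, sum_range_sub', ← mul_sum, sum_add_distrib, ← mul_sum,
          ← mul_sum]
  have hlow := mul_le_mul_of_nonneg_left (sub_le_sub_left (hflow (x K)) (f (x 0)))
    (by positivity : (0 : ℝ) ≤ (p + 1).factorial)
  have hκξ := mul_le_mul_of_nonneg_left (hξsum K)
    (mul_nonneg (by positivity : (0 : ℝ) ≤ p + 1) hκD)
  linarith

/-- Boundedness of the regularization parameters in the `p`-th order (`p ≥ 3`) inexact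
adaptive regularization framework. -/
theorem stmt_14 (p n m : ℕ) (hp : 3 ≤ p) (hn : 1 ≤ n) (hm : 1 ≤ m)
    (f : EuclideanSpace ℝ (Fin n) → ℝ)
    (hf : ContDiff ℝ (p : ℕ∞) f)
    (f_low : ℝ) (hflow : ∀ x, f_low ≤ f x)
    (Lp : ℝ) (hLp : 3 ≤ Lp)
    (hA3 : ∀ x y, ‖iteratedFDeriv ℝ p f x - iteratedFDeriv ℝ p f y‖ ≤ Lp * ‖x - y‖)
    (κhigh : ℝ) (hκhigh : 0 ≤ κhigh)
    (hA4 : ∀ (x : EuclideanSpace ℝ (Fin n)) (i : ℕ), 3 ≤ i → i ≤ p - 1 →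
      ∀ d : EuclideanSpace ℝ (Fin n), ‖d‖ ≤ 1 →
        -κhigh ≤ iteratedFDeriv ℝ i f x (fun _ => d))
    (κp : ℝ) (hκp : 0 ≤ κp)
    (hA5 : ∀ x, ‖iteratedFDeriv ℝ p f x‖ ≤ κp)
    (σ₀ θ₁ θ₂ κD κE : ℝ) (hσ₀ : 0 < σ₀) (hθ₁ : 1 < θ₁) (hθ₂ : 1 < θ₂)
    (hκD : 0 ≤ κD) (hκE : 0 ≤ κE)
    (x s : ℕ → EuclideanSpace ℝ (Fin n))
    (T : ℕ → ContinuousMultilinearMap ℝ (fun _ : Fin p => EuclideanSpace ℝ (Fin n)) ℝ)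
    (hTsym : ∀ (k : ℕ) (π : Equiv.Perm (Fin p)) (u : Fin p → EuclideanSpace ℝ (Fin n)),
      T k (fun i => u (π i)) = T k u)
    (σ : ℕ → ℝ) (hσ0 : σ 0 = σ₀)
    (hx : ∀ k, x (k + 1) = x k + s k)
    (hσrec : ∀ k, σ (k + 1) = σ k + σ k * ‖s k‖ ^ (p + 1))
    (ξ : ℕ → ℝ)
    (hξ : ∀ k, ξ k = ∑ i ∈ Finset.Icc 1 (2 * m - 1),
      if i ≤ k then ‖s (k - i)‖ ^ (p + 1) else 1)
    (ha : ∀ k, ‖T k - iteratedFDeriv ℝ p f (x k)‖ ^ (p + 1) ≤ κD * ξ k)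
    (ha' : ∀ k, ‖T k‖ ≤ κE)
    (hb : ∀ k,
      (∑ i ∈ Finset.Icc 1 (p - 1),
        (1 / (i.factorial : ℝ)) * iteratedFDeriv ℝ i f (x k) (fun _ => s k)) +
      (1 / (p.factorial : ℝ)) * T k (fun _ => s k) +
      (σ k / ((p + 1).factorial : ℝ)) * ‖s k‖ ^ (p + 1) ≤ 0)
    (G : ℕ → (EuclideanSpace ℝ (Fin n) →L[ℝ] ℝ))
    (hG : ∀ (k : ℕ) (d : EuclideanSpace ℝ (Fin n)),
      G k d = ⟪gradient f (x k), d⟫_ℝ +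
        (∑ i ∈ Finset.Icc 2 (p - 1), (1 / ((i - 1).factorial : ℝ)) *
          iteratedFDeriv ℝ i f (x k) (fun j : Fin i => if (j : ℕ) = i - 1 then d else s k)) +
        (1 / ((p - 1).factorial : ℝ)) *
          T k (fun j : Fin p => if (j : ℕ) = p - 1 then d else s k))
    (hc : ∀ k, ‖G k‖ ≤ θ₁ * σ k / (p.factorial : ℝ) * ‖s k‖ ^ p)
    (Hq : ℕ → EuclideanSpace ℝ (Fin n) → EuclideanSpace ℝ (Fin n) → ℝ)
    (hHq : ∀ (k : ℕ) (d d' : EuclideanSpace ℝ (Fin n)),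
      Hq k d d' = iteratedFDeriv ℝ 2 f (x k) ![d, d'] +
        (∑ i ∈ Finset.Icc 3 (p - 1), (1 / ((i - 2).factorial : ℝ)) *
          iteratedFDeriv ℝ i f (x k)
            (fun j : Fin i => if (j : ℕ) = i - 1 then d' else
              if (j : ℕ) = i - 2 then d else s k)) +
        (1 / ((p - 2).factorial : ℝ)) *
          T k (fun j : Fin p => if (j : ℕ) = p - 1 then d' else
            if (j : ℕ) = p - 2 then d else s k))
    (hd : ∀ k, sSup {r : ℝ |
        ∃ d : EuclideanSpace ℝ (Fin n), ‖d‖ = 1 ∧ r = max 0 (-(Hq k d d))} ≤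
      θ₂ * σ k / ((p - 1).factorial : ℝ) * ‖s k‖ ^ (p - 1)) :
    ∃ σmax : ℝ, ∀ k : ℕ, σ k ≤ σmax :=
  stmt_14_general p n m hp f hf f_low hflow Lp hLp hA3 σ₀ κD hσ₀ hκD x s T σ hσ0 hx hσrec ξ hξ ha hb
end

section
/- Under the p = 2 inexact adaptive regularization framework described in the context, there exists a constant C > 0 such that for every k ≥ 0: min_{1 ≤ j ≤ k+1} ‖∇f(x_j)‖ ≤ C · (k+1)^{−2/3}. -/
/-!
The cubic Taylor bound and the model decrease condition give
`6 f(x_{k+1}) + (σ_k - L - 2) ‖s_k‖³ ≤ 6 f(x_k) + κ_D ξ_k`, and the windows `ξ_k` sum to at most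
`M (M + Σ_j ‖s_j‖³)` with `M = 2m - 1`. The weights `σ_k` are nondecreasing: either they stay
bounded, and then `Σ_k σ_k ‖s_k‖³ = σ_K - σ_0` bounds `Σ_k ‖s_k‖³`, or they eventually exceed
`L + 3 + κ_D M`, after which the decrease of `f`, which is bounded below, pays for every further
`‖s_k‖³`. So `Σ_k ‖s_k‖³ < ∞`, hence `σ_k ≤ σ_0 exp (Σ_j ‖s_j‖³)` is bounded and
`‖∇f(x_{k+1})‖ = O(max(‖s_k‖, ‖B_k - ∇²f(x_k)‖)²)`, where the cubes of these maxima are summable.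
Among the first `k + 1` of them one has cube at most the average, `O(1/(k + 1))`.
-/

open scoped InnerProductSpace
open Finset

lemma norm_le_div_of_norm_deriv_le_mul_pow {F : Type*} [NormedAddCommGroup F] [NormedSpace ℝ F]
    {φ φ' : ℝ → F} (hφ : ∀ t, HasDerivAt φ (φ' t) t) (h0 : φ 0 = 0) {C : ℝ} (k : ℕ)
    (hφ' : ∀ t ∈ Set.Ico (0 : ℝ) 1, ‖φ' t‖ ≤ C * t ^ k) :
    ‖φ 1‖ ≤ C / (k + 1) := by
  have hB : ∀ t : ℝ, HasDerivAt (fun t => C * t ^ (k + 1) / (k + 1)) (C * t ^ k) t := by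
    intro t
    refine (((hasDerivAt_pow (k + 1) t).const_mul C).div_const ((k : ℝ) + 1)).congr_deriv ?_
    rw [Nat.add_sub_cancel]
    push_cast
    field_simp
  have := image_norm_le_of_norm_deriv_right_le_deriv_boundary
    (fun t _ => (hφ t).continuousAt.continuousWithinAt) (fun t _ => (hφ t).hasDerivWithinAt)
    (by simp [h0]) hB hφ' (Set.right_mem_Icc.mpr zero_le_one)
  simpa using this

section Taylor

variable {E : Type*} [NormedAddCommGroup E] [InnerProductSpace ℝ E] [CompleteSpace E]
  {f : E → ℝ} {H : E → E →L[ℝ] E} {L : ℝ}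

lemma hasFDerivAt_gradient_of_inner_eq_iteratedFDeriv (hf : ContDiff ℝ 2 f)
    (hH : ∀ x u v, ⟪H x u, v⟫_ℝ = iteratedFDeriv ℝ 2 f x ![u, v]) (x : E) :
    HasFDerivAt (gradient f) (H x) x := by
  have hdf : HasFDerivAt (fderiv ℝ f) (fderiv ℝ (fderiv ℝ f) x) x :=
    ((hf.fderiv_right (m := 1) le_rfl).differentiable one_ne_zero x).hasFDerivAt
  refine (((InnerProductSpace.toDual ℝ E).symm.toContinuousLinearEquiv.hasFDerivAt).comp x
    hdf).congr_fderiv ?_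
  ext u
  refine ext_inner_right ℝ fun v => ?_
  rw [hH, iteratedFDeriv_two_apply]
  simp

lemma norm_gradient_add_sub_sub_le (hgrad : ∀ x, HasFDerivAt (gradient f) (H x) x)
    (hLip : ∀ x y, ‖H x - H y‖ ≤ L * ‖x - y‖) (x s : E) :
    ‖gradient f (x + s) - gradient f x - H x s‖ ≤ L / 2 * ‖s‖ ^ 2 := by
  have hline : ∀ t : ℝ, HasDerivAt (fun t : ℝ => x + t • s) s t := fun t => by
    simpa using ((hasDerivAt_id t).smul_const s).const_add x
  have hφ : ∀ t : ℝ, HasDerivAt (fun t : ℝ => gradient f (x + t • s) - gradient f x - t • H x s)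
      (H (x + t • s) s - H x s) t := fun t => by
    have := (((hgrad _).comp_hasDerivAt t (hline t)).sub_const (gradient f x)).sub
      ((hasDerivAt_id t).smul_const (H x s))
    rwa [one_smul] at this
  have := norm_le_div_of_norm_deriv_le_mul_pow hφ (by simp) 1 fun t ht => by
    calc ‖H (x + t • s) s - H x s‖ ≤ ‖H (x + t • s) - H x‖ * ‖s‖ := by
          rw [← sub_apply]; exact ContinuousLinearMap.le_opNorm _ _
      _ ≤ L * (t * ‖s‖) * ‖s‖ := by
          gcongr
          simpa [norm_smul, abs_of_nonneg ht.1] using hLip (x + t • s) x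
      _ = L * ‖s‖ ^ 2 * t ^ 1 := by ring
  convert this using 1 <;> simp; ring

lemma le_add_inner_gradient_add_inner_add_cube (hf : Differentiable ℝ f)
    (hgrad : ∀ x, HasFDerivAt (gradient f) (H x) x) (hLip : ∀ x y, ‖H x - H y‖ ≤ L * ‖x - y‖)
    (x s : E) :
    f (x + s) ≤ f x + ⟪gradient f x, s⟫_ℝ + 1 / 2 * ⟪H x s, s⟫_ℝ + L / 6 * ‖s‖ ^ 3 := by
  have hline : ∀ t : ℝ, HasDerivAt (fun t : ℝ => x + t • s) s t := fun t => by
    simpa using ((hasDerivAt_id t).smul_const s).const_add x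
  have hφ : ∀ t : ℝ, HasDerivAt
      (fun t : ℝ => f (x + t • s) - f x - t * ⟪gradient f x, s⟫_ℝ - t ^ 2 / 2 * ⟪H x s, s⟫_ℝ)
      ⟪gradient f (x + t • s) - gradient f x - t • H x s, s⟫_ℝ t := fun t => by
    have := (((((hf _).hasFDerivAt.comp_hasDerivAt t (hline t)).sub_const (f x)).sub
      ((hasDerivAt_id t).mul_const ⟪gradient f x, s⟫_ℝ)).sub
      (((hasDerivAt_pow 2 t).div_const 2).mul_const ⟪H x s, s⟫_ℝ))
    refine this.congr_deriv ?_
    simp only [inner_sub_left, real_inner_smul_left, inner_gradient_left]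
    ring
  have := norm_le_div_of_norm_deriv_le_mul_pow hφ (by simp) 2 fun t _ => by
    calc ‖⟪gradient f (x + t • s) - gradient f x - t • H x s, s⟫_ℝ‖
        ≤ ‖gradient f (x + t • s) - gradient f x - H x (t • s)‖ * ‖s‖ := by
          rw [map_smul]; exact norm_inner_le_norm _ _
      _ ≤ L / 2 * ‖t • s‖ ^ 2 * ‖s‖ := by
          gcongr; exact norm_gradient_add_sub_sub_le hgrad hLip x (t • s)
      _ = L / 2 * ‖s‖ ^ 3 * t ^ 2 := by rw [norm_smul, Real.norm_eq_abs, mul_pow, sq_abs]; ring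
  rw [Real.norm_eq_abs, abs_le] at this
  norm_num at this
  rw [inner_gradient_left]
  linarith [this.2]

lemma norm_gradient_add_le (hgrad : ∀ x, HasFDerivAt (gradient f) (H x) x)
    (hLip : ∀ x y, ‖H x - H y‖ ≤ L * ‖x - y‖) (x s : E) (B : E →L[ℝ] E) :
    ‖gradient f (x + s)‖ ≤ L / 2 * ‖s‖ ^ 2 + ‖gradient f x + B s‖ + ‖B - H x‖ * ‖s‖ := by
  have hsplit : gradient f (x + s)
      = (gradient f (x + s) - gradient f x - H x s) + (gradient f x + B s) - (B - H x) s := by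
    simp only [sub_apply]; abel
  rw [hsplit]
  refine (norm_sub_le _ _).trans ?_
  gcongr
  · exact (norm_add_le _ _).trans (by gcongr; exact norm_gradient_add_sub_sub_le hgrad hLip x s)
  · exact ContinuousLinearMap.le_opNorm _ _

lemma norm_gradient_add_le_mul_max_sq (hgrad : ∀ x, HasFDerivAt (gradient f) (H x) x)
    (hLip : ∀ x y, ‖H x - H y‖ ≤ L * ‖x - y‖) {x s : E} {B : E →L[ℝ] E} {a : ℝ}
    (ha : 0 ≤ L + a) (hres : ‖gradient f x + B s‖ ≤ a / 2 * ‖s‖ ^ 2) :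
    ‖gradient f (x + s)‖ ≤ ((L + a) / 2 + 1) * max ‖s‖ ‖B - H x‖ ^ 2 := by
  calc ‖gradient f (x + s)‖ ≤ (L + a) / 2 * ‖s‖ ^ 2 + ‖B - H x‖ * ‖s‖ := by
        linarith [norm_gradient_add_le hgrad hLip x s B]
    _ ≤ (L + a) / 2 * max ‖s‖ ‖B - H x‖ ^ 2 + max ‖s‖ ‖B - H x‖ * max ‖s‖ ‖B - H x‖ := by
        gcongr <;> simp
    _ = ((L + a) / 2 + 1) * max ‖s‖ ‖B - H x‖ ^ 2 := by ring

lemma six_mul_add_le_of_model_decrease (hf : Differentiable ℝ f)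
    (hgrad : ∀ x, HasFDerivAt (gradient f) (H x) x) (hLip : ∀ x y, ‖H x - H y‖ ≤ L * ‖x - y‖)
    {x s : E} {B : E →L[ℝ] E} {σ : ℝ}
    (hmodel : ⟪gradient f x, s⟫_ℝ + 1 / 2 * ⟪B s, s⟫_ℝ + σ / 6 * ‖s‖ ^ 3 ≤ 0) :
    6 * f (x + s) + (σ - (L + 2)) * ‖s‖ ^ 3 ≤ 6 * f x + ‖B - H x‖ ^ 3 := by
  have htaylor := le_add_inner_gradient_add_inner_add_cube hf hgrad hLip x s
  have hinner : ⟪H x s, s⟫_ℝ = ⟪B s, s⟫_ℝ - ⟪(B - H x) s, s⟫_ℝ := by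
    simp only [sub_apply, inner_sub_left]; ring
  have herr : -⟪(B - H x) s, s⟫_ℝ ≤ ‖B - H x‖ * ‖s‖ ^ 2 := by
    calc -⟪(B - H x) s, s⟫_ℝ ≤ ‖(B - H x) s‖ * ‖s‖ :=
          (neg_le_abs _).trans (abs_real_inner_le_norm _ _)
      _ ≤ ‖B - H x‖ * ‖s‖ * ‖s‖ := by gcongr; exact ContinuousLinearMap.le_opNorm _ _
      _ = ‖B - H x‖ * ‖s‖ ^ 2 := by ring
  -- AM-GM: `3 D u² ≤ D³ + 2 u³`, since the difference is `(D - u)² (D + 2u)`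
  have hamgm : 3 * (‖B - H x‖ * ‖s‖ ^ 2) ≤ ‖B - H x‖ ^ 3 + 2 * ‖s‖ ^ 3 := by
    nlinarith [mul_nonneg (sq_nonneg (‖B - H x‖ - ‖s‖))
      (by positivity : (0 : ℝ) ≤ ‖B - H x‖ + 2 * ‖s‖)]
  rw [hinner] at htaylor
  linarith

end Taylor

lemma sum_range_ite_le_eq_min_add (w : ℕ → ℝ) (i K : ℕ) :
    ∑ k ∈ range K, (if i ≤ k then w (k - i) else 1) = min K i + ∑ j ∈ range (K - i), w j := by
  induction K with
  | zero => simp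
  | succ K ih =>
    rw [sum_range_succ, ih]
    split_ifs with h
    · rw [min_eq_right (show i ≤ K + 1 by omega), min_eq_right h,
        show K + 1 - i = K - i + 1 by omega, sum_range_succ]
      ring
    · rw [min_eq_left (show K + 1 ≤ i by omega), min_eq_left (show K ≤ i by omega),
        show K + 1 - i = K - i by omega]
      push_cast
      ring

lemma sum_range_sum_window_le {w : ℕ → ℝ} (hw : ∀ j, 0 ≤ w j) (M K : ℕ) :
    ∑ k ∈ range K, ∑ i ∈ Icc 1 M, (if i ≤ k then w (k - i) else 1)
      ≤ M * (M + ∑ j ∈ range K, w j) := by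
  rw [sum_comm]
  calc ∑ i ∈ Icc 1 M, ∑ k ∈ range K, (if i ≤ k then w (k - i) else 1)
      ≤ ∑ _i ∈ Icc 1 M, (M + ∑ j ∈ range K, w j) := by
        refine sum_le_sum fun i hi => ?_
        rw [sum_range_ite_le_eq_min_add]
        refine add_le_add ?_ ?_
        · exact_mod_cast (min_le_right K i).trans (mem_Icc.mp hi).2
        · exact sum_le_sum_of_subset_of_nonneg (range_subset_range.mpr (Nat.sub_le K i))
            fun j _ _ => hw j
    _ = M * (M + ∑ j ∈ range K, w j) := by simp [mul_add]

lemma sum_range_le_sub_add_sum {F a e : ℕ → ℝ} (h : ∀ k, F (k + 1) + a k ≤ F k + e k) (K : ℕ) :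
    ∑ k ∈ range K, a k ≤ F 0 - F K + ∑ k ∈ range K, e k := by
  induction K with
  | zero => simp
  | succ K ih => rw [sum_range_succ, sum_range_succ]; linarith [h K]

section Regularization

variable {σ w : ℕ → ℝ} (hw : ∀ k, 0 ≤ w k) (hσ : ∀ k, σ (k + 1) = σ k + σ k * w k)
include hw hσ

lemma pos_of_succ_eq_add_mul (hσ0 : 0 < σ 0) (k : ℕ) : 0 < σ k := by
  induction k with
  | zero => exact hσ0
  | succ k ih => rw [hσ]; nlinarith [hw k]

lemma le_mul_exp_sum_of_succ_eq (hσ0 : 0 ≤ σ 0) (K : ℕ) :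
    σ K ≤ σ 0 * Real.exp (∑ k ∈ range K, w k) := by
  induction K with
  | zero => simp
  | succ K ih =>
    rw [hσ, sum_range_succ, Real.exp_add, ← mul_one_add]
    calc σ K * (1 + w K) ≤ σ 0 * Real.exp (∑ k ∈ range K, w k) * (1 + w K) := by
          gcongr; linarith [hw K]
      _ ≤ σ 0 * Real.exp (∑ k ∈ range K, w k) * Real.exp (w K) := by
          gcongr; linarith [Real.add_one_le_exp (w K)]
      _ = _ := by ring

lemma exists_sum_range_le_of_sum_sub_mul_le (hσ0 : 0 < σ 0) {τ D : ℝ}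
    (h : ∀ K, ∑ k ∈ range K, (σ k - τ) * w k ≤ D) : ∃ W, ∀ K, ∑ k ∈ range K, w k ≤ W := by
  have hpos := pos_of_succ_eq_add_mul hw hσ hσ0
  have hmono : Monotone σ := monotone_nat_of_le_succ fun k => by
    rw [hσ]; nlinarith [hpos k, hw k]
  by_cases hbdd : ∀ k, σ k ≤ τ + 1
  · refine ⟨(τ + 1) / σ 0, fun K => ?_⟩
    have hsum : ∑ k ∈ range K, σ k * w k = σ K - σ 0 := by
      rw [← sum_range_sub]; exact sum_congr rfl fun k _ => by rw [hσ]; ring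
    have : σ 0 * ∑ k ∈ range K, w k ≤ ∑ k ∈ range K, σ k * w k := by
      rw [mul_sum]; exact sum_le_sum fun k _ => by gcongr; exacts [hw k, hmono (Nat.zero_le k)]
    rw [le_div_iff₀ hσ0]
    linarith [hbdd K, hpos 0]
  · simp only [not_forall, not_le] at hbdd
    obtain ⟨k₀, hk₀⟩ := hbdd
    refine ⟨D + (1 + τ) * ∑ k ∈ range k₀, w k, fun K => ?_⟩
    have hhead : -τ * ∑ k ∈ range k₀, w k ≤ ∑ k ∈ range k₀, (σ k - τ) * w k := by
      rw [mul_sum]; exact sum_le_sum fun k _ => by nlinarith [hpos k, hw k]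
    have htail : ∑ k ∈ range K, w (k₀ + k) ≤ ∑ k ∈ range K, (σ (k₀ + k) - τ) * w (k₀ + k) :=
      sum_le_sum fun k _ => by
        nlinarith [hw (k₀ + k), hmono (Nat.le_add_right k₀ k)]
    have hK := h (k₀ + K)
    rw [sum_range_add] at hK
    calc ∑ k ∈ range K, w k ≤ ∑ k ∈ range (k₀ + K), w k :=
          sum_le_sum_of_subset_of_nonneg (range_subset_range.mpr (Nat.le_add_left K k₀))
            fun k _ _ => hw k
      _ ≤ _ := by rw [sum_range_add]; linarith

lemma exists_sum_range_le_of_descent (hσ0 : 0 < σ 0) {F e : ℕ → ℝ} {F₀ c A b : ℝ}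
    (hF : ∀ k, F₀ ≤ F k) (hdesc : ∀ k, F (k + 1) + (σ k - c) * w k ≤ F k + e k)
    (he : ∀ K, ∑ k ∈ range K, e k ≤ A + b * ∑ k ∈ range K, w k) :
    ∃ W, ∀ K, ∑ k ∈ range K, w k ≤ W := by
  refine exists_sum_range_le_of_sum_sub_mul_le hw hσ hσ0 (τ := c + b) (D := F 0 - F₀ + A)
    fun K => ?_
  have hsplit : ∑ k ∈ range K, (σ k - (c + b)) * w k
      = ∑ k ∈ range K, (σ k - c) * w k - b * ∑ k ∈ range K, w k := by
    rw [mul_sum, ← sum_sub_distrib]; exact sum_congr rfl fun k _ => by ring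
  linarith [sum_range_le_sub_add_sum hdesc K, hF K, he K]

end Regularization

lemma sq_le_rpow_of_pow_three_le {v t : ℝ} (hv : 0 ≤ v) (h : v ^ 3 ≤ t) :
    v ^ 2 ≤ t ^ ((2 : ℝ) / 3) := by
  have : v ^ 2 = (v ^ 3) ^ ((2 : ℝ) / 3) := by
    rw [← Real.rpow_natCast v 3, ← Real.rpow_mul hv]; norm_num
  rw [this]
  exact Real.rpow_le_rpow (by positivity) h (by norm_num)

lemma exists_inf'_Icc_le_mul_rpow {r v : ℕ → ℝ} {c V : ℝ} (hc : 0 < c) (hv : ∀ j, 0 ≤ v j)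
    (hr : ∀ j, r (j + 1) ≤ c * v j ^ 2) (hV : ∀ K, ∑ j ∈ range K, v j ^ 3 ≤ V) :
    ∃ C : ℝ, 0 < C ∧ ∀ k : ℕ,
      (Icc 1 (k + 1)).inf' (nonempty_Icc.mpr (Nat.le_add_left 1 k)) r ≤
        C * ((k : ℝ) + 1) ^ (-(2 : ℝ) / 3) := by
  set V' := max V 1
  refine ⟨c * V' ^ ((2 : ℝ) / 3), by positivity, fun k => ?_⟩
  have hk : (0 : ℝ) < k + 1 := by positivity
  obtain ⟨j, hj, hvj⟩ : ∃ j ∈ range (k + 1), v j ^ 3 ≤ V' / (k + 1) := by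
    refine exists_le_of_sum_le nonempty_range_add_one ?_
    rw [sum_const, card_range, nsmul_eq_mul]
    push_cast
    rw [mul_div_cancel₀ _ hk.ne']
    exact (hV (k + 1)).trans (le_max_left V 1)
  calc (Icc 1 (k + 1)).inf' _ r ≤ r (j + 1) :=
        inf'_le _ (mem_Icc.mpr ⟨by omega, by simpa using mem_range.mp hj⟩)
    _ ≤ c * (V' / (k + 1)) ^ ((2 : ℝ) / 3) :=
        (hr j).trans (by gcongr; exact sq_le_rpow_of_pow_three_le (hv j) hvj)
    _ = c * V' ^ ((2 : ℝ) / 3) * ((k : ℝ) + 1) ^ (-(2 : ℝ) / 3) := by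
        rw [Real.div_rpow (by positivity) hk.le, neg_div, Real.rpow_neg hk.le]
        ring

theorem stmt_17_general (n m : ℕ)
    (f : EuclideanSpace ℝ (Fin n) → ℝ)
    (hf : ContDiff ℝ (2 : ℕ∞) f)
    (H : EuclideanSpace ℝ (Fin n) → (EuclideanSpace ℝ (Fin n) →L[ℝ] EuclideanSpace ℝ (Fin n)))
    (hH : ∀ (x u v : EuclideanSpace ℝ (Fin n)), ⟪H x u, v⟫_ℝ = iteratedFDeriv ℝ 2 f x ![u, v])
    (f_low : ℝ) (hflow : ∀ x, f_low ≤ f x)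
    (L : ℝ) (hL : 3 ≤ L)
    (hLip : ∀ x y, ‖H x - H y‖ ≤ L * ‖x - y‖)
    (σ₀ θ₁ κD : ℝ) (hσ₀ : 0 < σ₀) (hθ₁ : 1 < θ₁) (hκD : 0 ≤ κD)
    (x s : ℕ → EuclideanSpace ℝ (Fin n))
    (B : ℕ → (EuclideanSpace ℝ (Fin n) →L[ℝ] EuclideanSpace ℝ (Fin n)))
    (σ : ℕ → ℝ) (hσ0 : σ 0 = σ₀)
    (hx : ∀ k, x (k + 1) = x k + s k)
    (hσrec : ∀ k, σ (k + 1) = σ k + σ k * ‖s k‖ ^ 3)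
    (ξ : ℕ → ℝ)
    (hξ : ∀ k, ξ k = ∑ i ∈ Finset.Icc 1 (2 * m - 1),
      if i ≤ k then ‖s (k - i)‖ ^ 3 else 1)
    (ha : ∀ k, ‖B k - H (x k)‖ ^ 3 ≤ κD * ξ k)
    (hb : ∀ k, ⟪gradient f (x k), s k⟫_ℝ + (1 / 2) * ⟪B k (s k), s k⟫_ℝ
        + (σ k / 6) * ‖s k‖ ^ 3 ≤ 0)
    (hc : ∀ k, ‖gradient f (x k) + B k (s k)‖ ≤ (θ₁ * σ k / 2) * ‖s k‖ ^ 2) :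
    ∃ C : ℝ, 0 < C ∧ ∀ k : ℕ,
      (Finset.Icc 1 (k + 1)).inf' (Finset.nonempty_Icc.mpr (Nat.le_add_left 1 k))
          (fun j => ‖gradient f (x j)‖) ≤
        C * ((k : ℝ) + 1) ^ (-(2 : ℝ) / 3) := by
  have hgrad := hasFDerivAt_gradient_of_inner_eq_iteratedFDeriv hf hH
  have hw : ∀ k, 0 ≤ ‖s k‖ ^ 3 := fun k => by positivity
  set M : ℕ := 2 * m - 1
  have hξsum : ∀ K, ∑ k ∈ range K, ξ k ≤ M * (M + ∑ k ∈ range K, ‖s k‖ ^ 3) := fun K => by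
    simpa only [hξ] using sum_range_sum_window_le hw M K
  have hdescent : ∀ k, 6 * f (x (k + 1)) + (σ k - (L + 2)) * ‖s k‖ ^ 3
      ≤ 6 * f (x k) + κD * ξ k := fun k => by
    rw [hx]
    linarith [ha k,
      six_mul_add_le_of_model_decrease (hf.differentiable (by norm_num)) hgrad hLip (hb k)]
  obtain ⟨W, hW⟩ := exists_sum_range_le_of_descent hw hσrec (hσ0 ▸ hσ₀)
    (F := fun k => 6 * f (x k)) (F₀ := 6 * f_low) (fun k => by linarith [hflow (x k)]) hdescent
    (A := κD * M ^ 2) (b := κD * M) fun K => by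
      rw [← mul_sum]; linarith [mul_le_mul_of_nonneg_left (hξsum K) hκD]
  have hσle : ∀ k, σ k ≤ σ₀ * Real.exp W := fun k => by
    refine (le_mul_exp_sum_of_succ_eq hw hσrec (hσ0 ▸ hσ₀.le) k).trans ?_
    rw [hσ0]; gcongr; exact hW k
  have hr : ∀ k, ‖gradient f (x (k + 1))‖
      ≤ ((L + θ₁ * (σ₀ * Real.exp W)) / 2 + 1) * max ‖s k‖ ‖B k - H (x k)‖ ^ 2 := fun k => by
    rw [hx]
    refine norm_gradient_add_le_mul_max_sq hgrad hLip (by positivity) ((hc k).trans ?_)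
    gcongr
    exact hσle k
  refine exists_inf'_Icc_le_mul_rpow (by positivity) (fun k => by positivity) hr
    (V := W + κD * (M * (M + W))) fun K => ?_
  have hcube : ∀ k, max ‖s k‖ ‖B k - H (x k)‖ ^ 3 ≤ ‖s k‖ ^ 3 + κD * ξ k := fun k => by
    rcases max_cases ‖s k‖ ‖B k - H (x k)‖ with ⟨h, -⟩ | ⟨h, -⟩ <;> rw [h] <;>
      linarith [ha k, hw k, pow_nonneg (norm_nonneg (B k - H (x k))) 3]
  calc ∑ k ∈ range K, max ‖s k‖ ‖B k - H (x k)‖ ^ 3 ≤ ∑ k ∈ range K, (‖s k‖ ^ 3 + κD * ξ k) :=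
        sum_le_sum fun k _ => hcube k
    _ ≤ W + κD * (M * (M + W)) := by
        rw [sum_add_distrib, ← mul_sum]
        gcongr
        · exact hW K
        · exact (hξsum K).trans (by gcongr; exact hW K)

/-- Gradient-norm complexity for the `p = 2` inexact adaptive regularization framework. -/
theorem stmt_17 (n m : ℕ) (hn : 1 ≤ n) (hm : 1 ≤ m)
    (f : EuclideanSpace ℝ (Fin n) → ℝ)
    (hf : ContDiff ℝ (2 : ℕ∞) f)
    (H : EuclideanSpace ℝ (Fin n) → (EuclideanSpace ℝ (Fin n) →L[ℝ] EuclideanSpace ℝ (Fin n)))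
    (hH : ∀ (x u v : EuclideanSpace ℝ (Fin n)), ⟪H x u, v⟫_ℝ = iteratedFDeriv ℝ 2 f x ![u, v])
    (hHsa : ∀ x, IsSelfAdjoint (H x))
    (f_low : ℝ) (hflow : ∀ x, f_low ≤ f x)
    (L : ℝ) (hL : 3 ≤ L)
    (hLip : ∀ x y, ‖H x - H y‖ ≤ L * ‖x - y‖)
    (σ₀ θ₁ θ₂ κD : ℝ) (hσ₀ : 0 < σ₀) (hθ₁ : 1 < θ₁) (hθ₂ : 1 < θ₂) (hκD : 0 ≤ κD)
    (x s : ℕ → EuclideanSpace ℝ (Fin n))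
    (B : ℕ → (EuclideanSpace ℝ (Fin n) →L[ℝ] EuclideanSpace ℝ (Fin n)))
    (hBsa : ∀ k, IsSelfAdjoint (B k))
    (σ : ℕ → ℝ) (hσ0 : σ 0 = σ₀)
    (hx : ∀ k, x (k + 1) = x k + s k)
    (hσrec : ∀ k, σ (k + 1) = σ k + σ k * ‖s k‖ ^ 3)
    (ξ : ℕ → ℝ)
    (hξ : ∀ k, ξ k = ∑ i ∈ Finset.Icc 1 (2 * m - 1),
      if i ≤ k then ‖s (k - i)‖ ^ 3 else 1)
    (chi : (EuclideanSpace ℝ (Fin n) →L[ℝ] EuclideanSpace ℝ (Fin n)) → ℝ)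
    (hchi : ∀ A, chi A =
      sSup {r : ℝ | ∃ d : EuclideanSpace ℝ (Fin n), ‖d‖ = 1 ∧ r = max 0 (-⟪A d, d⟫_ℝ)})
    (ha : ∀ k, ‖B k - H (x k)‖ ^ 3 ≤ κD * ξ k)
    (hb : ∀ k, ⟪gradient f (x k), s k⟫_ℝ + (1 / 2) * ⟪B k (s k), s k⟫_ℝ
        + (σ k / 6) * ‖s k‖ ^ 3 ≤ 0)
    (hc : ∀ k, ‖gradient f (x k) + B k (s k)‖ ≤ (θ₁ * σ k / 2) * ‖s k‖ ^ 2)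
    (hd : ∀ k, chi (B k) ≤ θ₂ * σ k * ‖s k‖) :
    ∃ C : ℝ, 0 < C ∧ ∀ k : ℕ,
      (Finset.Icc 1 (k + 1)).inf' (Finset.nonempty_Icc.mpr (Nat.le_add_left 1 k))
          (fun j => ‖gradient f (x j)‖) ≤
        C * ((k : ℝ) + 1) ^ (-(2 : ℝ) / 3) :=
  stmt_17_general n m f hf H hH f_low hflow L hL hLip σ₀ θ₁ κD hσ₀ hθ₁ hκD x s B σ hσ0 hx hσrec ξ hξ
    ha hb hc
end
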